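/- arXiv:0705.2058 — 6 statements merged into one kernel-verified Lean document; each statement's English description precedes it below -/
import Mathlib

section
/- Let X be a Suslin line. Then every π-base of X has the property that some member is contained in infinitely many members; i.e., the Noetherian π-type of X is at least ω₁. -/
open Cardinal

/-- `A` is a π-base of `X`: a family of nonempty open sets such that every nonempty
open set contains a member. -/
def IsPiBase (X : Type u) [TopologicalSpace X] (A : Set (Set X)) : Prop :=
  (∀ u ∈ A, IsOpen u ∧ u.Nonempty) ∧ ∀ v : Set X, IsOpen v → v.Nonempty → ∃ u ∈ A, u ⊆ v

/-- A space is ccc if every pairwise disjoint family of nonempty open sets is countable. -/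
def CCC (X : Type u) [TopologicalSpace X] : Prop :=
  ∀ 𝒰 : Set (Set X), (∀ u ∈ 𝒰, IsOpen u ∧ u.Nonempty) → 𝒰.PairwiseDisjoint id →
    𝒰.Countable

open Set

namespace SuslinPiNt

variable {X : Type u} [LinearOrder X] [TopologicalSpace X] [OrderTopology X]

/-- The `ordConnectedComponent` of a point in an open set is open (order topology). -/
theorem isOpen_ordConnectedComponent' {u : Set X} (hu : IsOpen u) (x : X) :
    IsOpen (ordConnectedComponent u x) := by
  rw [isOpen_iff_mem_nhds]
  intro y hy
  have hxy : Set.uIcc x y ⊆ u := hy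
  rw [ordConnectedComponent_eq hxy]
  exact ordConnectedComponent_mem_nhds.2 (hu.mem_nhds (hxy right_mem_uIcc))

/-- "C strictly precedes D": some point of `C` lies strictly below all of `D`. -/
def Prec (C D : Set X) : Prop := ∃ c ∈ C, ∀ d ∈ D, c < d

theorem Prec.asymm {C D : Set X} (h1 : Prec C D) (h2 : Prec D C) : False := by
  obtain ⟨c, hc, h1⟩ := h1
  obtain ⟨d, hd, h2⟩ := h2
  exact lt_asymm (h1 d hd) (h2 c hc)

theorem Prec.irrefl {C : Set X} (h : Prec C C) : False := Prec.asymm h h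

theorem Prec.trans {C D E : Set X} (h1 : Prec C D) (h2 : Prec D E) : Prec C E := by
  obtain ⟨c, hc, h1⟩ := h1
  obtain ⟨d, hd, h2⟩ := h2
  exact ⟨c, hc, fun e he => lt_trans (h1 d hd) (h2 e he)⟩

theorem Prec.ne {C D : Set X} (h : Prec C D) : C ≠ D := by
  rintro rfl; exact h.irrefl

section Main

variable {B : Set (Set X)}
  (hGood : ∀ C ∈ B, IsOpen C ∧ C.Nonempty ∧ C.OrdConnected)
  (hPi : ∀ v : Set X, IsOpen v → v.Nonempty → ∃ C ∈ B, C ⊆ v)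
  (hFin : ∀ C ∈ B, {D | D ∈ B ∧ C ⊆ D}.Finite)

/-- The (finite) collection of members of `B` containing `C`. -/
def supp (B : Set (Set X)) (C : Set X) : Set (Set X) := {D | D ∈ B ∧ C ⊆ D}

/-- The members of `B` of rank `n`. -/
def lev (B : Set (Set X)) (n : ℕ) : Set (Set X) := {C | C ∈ B ∧ (supp B C).ncard = n}

include hFin in
theorem eq_of_subset {C D : Set X} (hC : C ∈ B) (hD : D ∈ B) (hCD : C ⊆ D)
    (hr : (supp B C).ncard = (supp B D).ncard) : C = D := by
  have hsub : supp B D ⊆ supp B C := fun E hE => ⟨hE.1, hCD.trans hE.2⟩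
  have hfin : (supp B C).Finite := hFin C hC
  have heq : supp B D = supp B C := eq_of_subset_of_ncard_le hsub hr.le hfin
  have hCmem : C ∈ supp B C := ⟨hC, subset_rfl⟩
  rw [← heq] at hCmem
  exact le_antisymm hCD hCmem.2

include hGood hFin in
theorem lev_total {n : ℕ} {C D : Set X} (hC : C ∈ lev B n) (hD : D ∈ lev B n)
    (hne : C ≠ D) : Prec C D ∨ Prec D C := by
  have hCn : ¬C ⊆ D := fun h => hne (eq_of_subset hFin hC.1 hD.1 h (hC.2.trans hD.2.symm))
  have hDn : ¬D ⊆ C := fun h =>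
    hne ((eq_of_subset hFin hD.1 hC.1 h (hD.2.trans hC.2.symm)).symm)
  obtain ⟨c, hc, hcD⟩ := not_subset.1 hCn
  obtain ⟨d, hd, hdC⟩ := not_subset.1 hDn
  have hCo : C.OrdConnected := (hGood C hC.1).2.2
  have hDo : D.OrdConnected := (hGood D hD.1).2.2
  rcases lt_trichotomy c d with h | h | h
  · left
    refine ⟨c, hc, fun e he => ?_⟩
    by_contra hce
    exact hcD (hDo.out he hd ⟨not_lt.1 hce, h.le⟩)
  · exact absurd (h ▸ hd) hcD
  · right
    refine ⟨d, hd, fun e he => ?_⟩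
    by_contra hde
    exact hdC (hCo.out he hc ⟨not_lt.1 hde, h.le⟩)

include hGood hFin in
theorem between {n : ℕ} {C E F : Set X} (hC : C ∈ lev B n) (hE : E ∈ lev B n)
    (hF : F ∈ lev B n) (hCE : Prec C E) (hEF : Prec E F) : C ∩ F ⊆ E := by
  rintro x ⟨hxC, hxF⟩
  have hnFE : ¬Prec F E := fun h => hEF.asymm h
  obtain ⟨e₁, he₁E, he₁x⟩ : ∃ e ∈ E, e ≤ x := by
    by_contra h
    push_neg at h
    exact hnFE ⟨x, hxF, fun e he => (h e he)⟩
  by_cases hcase : ∃ e ∈ E, x < e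
  · obtain ⟨e₂, he₂E, hxe₂⟩ := hcase
    exact (hGood E hE.1).2.2.out he₁E he₂E ⟨he₁x, hxe₂.le⟩
  · push_neg at hcase
    obtain ⟨c₀, hc₀C, hc₀⟩ := hCE
    have hCo : C.OrdConnected := (hGood C hC.1).2.2
    have hEC : E ⊆ C := fun e he => hCo.out hc₀C hxC ⟨(hc₀ e he).le, hcase e he⟩
    have hec : E = C := eq_of_subset hFin hE.1 hC.1 hEC (hE.2.trans hC.2.symm)
    rw [hec] at hc₀
    exact absurd (hc₀ c₀ hc₀C) (lt_irrefl c₀)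

include hGood hPi hFin in
theorem interval_finite {n : ℕ} {D₁ D₂ : Set X} (hD₁ : D₁ ∈ lev B n) (hD₂ : D₂ ∈ lev B n)
    (h12 : Prec D₁ D₂) (hmeet : (D₁ ∩ D₂).Nonempty) :
    {E | E ∈ lev B n ∧ Prec D₁ E ∧ Prec E D₂}.Finite := by
  have hopen : IsOpen (D₁ ∩ D₂) := ((hGood D₁ hD₁.1).1).inter ((hGood D₂ hD₂.1).1)
  obtain ⟨w, hw, hwsub⟩ := hPi (D₁ ∩ D₂) hopen hmeet
  refine (hFin w hw).subset ?_
  rintro E ⟨hE, hD₁E, hED₂⟩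
  exact ⟨hE.1, hwsub.trans (between hGood hFin hD₁ hE hD₂ hD₁E hED₂)⟩

include hGood hPi hFin in
theorem nplus_countable {n : ℕ} {D : Set X} (hD : D ∈ lev B n) :
    {E | E ∈ lev B n ∧ Prec D E ∧ (D ∩ E).Nonempty}.Countable := by
  set N := {E | E ∈ lev B n ∧ Prec D E ∧ (D ∩ E).Nonempty} with hN
  rw [Set.countable_iff_exists_injective]
  refine ⟨fun E => ({E' | E' ∈ lev B n ∧ Prec D E' ∧ Prec E' E.1}).ncard, ?_⟩
  have key : ∀ E E' : N, Prec E.1 E'.1 →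
      ({E'' | E'' ∈ lev B n ∧ Prec D E'' ∧ Prec E'' E.1}).ncard <
      ({E'' | E'' ∈ lev B n ∧ Prec D E'' ∧ Prec E'' E'.1}).ncard := by
    rintro ⟨E, hEl, hDE, hmE⟩ ⟨E', hE'l, hDE', hmE'⟩ hEE'
    refine ncard_lt_ncard ?_ (interval_finite hGood hPi hFin hD hE'l hDE' hmE')
    constructor
    · rintro E'' ⟨h1, h2, h3⟩
      exact ⟨h1, h2, h3.trans hEE'⟩
    · rw [not_subset]
      refine ⟨E, ⟨hEl, hDE, hEE'⟩, fun h => h.2.2.irrefl⟩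
  intro E E' h
  by_contra hne
  have hne' : E.1 ≠ E'.1 := fun h' => hne (Subtype.ext h')
  rcases lev_total hGood hFin E.2.1 E'.2.1 hne' with hp | hp
  · exact absurd h (key E E' hp).ne
  · exact absurd h.symm (key E' E hp).ne

include hGood hPi hFin in
theorem nminus_countable {n : ℕ} {D : Set X} (hD : D ∈ lev B n) :
    {E | E ∈ lev B n ∧ Prec E D ∧ (E ∩ D).Nonempty}.Countable := by
  set N := {E | E ∈ lev B n ∧ Prec E D ∧ (E ∩ D).Nonempty} with hN
  rw [Set.countable_iff_exists_injective]
  refine ⟨fun E => ({E' | E' ∈ lev B n ∧ Prec E.1 E' ∧ Prec E' D}).ncard, ?_⟩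
  have key : ∀ E E' : N, Prec E'.1 E.1 →
      ({E'' | E'' ∈ lev B n ∧ Prec E.1 E'' ∧ Prec E'' D}).ncard <
      ({E'' | E'' ∈ lev B n ∧ Prec E'.1 E'' ∧ Prec E'' D}).ncard := by
    rintro ⟨E, hEl, hED, hmE⟩ ⟨E', hE'l, hE'D, hmE'⟩ hE'E
    refine ncard_lt_ncard ?_ (interval_finite hGood hPi hFin hE'l hD hE'D hmE')
    constructor
    · rintro E'' ⟨h1, h2, h3⟩
      exact ⟨h1, hE'E.trans h2, h3⟩
    · rw [not_subset]
      refine ⟨E, ⟨hEl, hE'E, hED⟩, fun h => h.2.1.irrefl⟩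
  intro E E' h
  by_contra hne
  have hne' : E.1 ≠ E'.1 := fun h' => hne (Subtype.ext h')
  rcases lev_total hGood hFin E.2.1 E'.2.1 hne' with hp | hp
  · exact absurd h.symm (key E' E hp).ne
  · exact absurd h (key E E' hp).ne

include hGood hPi hFin in
theorem lev_countable (hccc : CCC X) (n : ℕ) : (lev B n).Countable := by
  -- take a maximal pairwise disjoint subfamily of `lev B n`
  have hzorn : ∀ c ⊆ {I | I ⊆ lev B n ∧ I.PairwiseDisjoint id}, IsChain (· ⊆ ·) c →
      ∃ ub ∈ {I | I ⊆ lev B n ∧ I.PairwiseDisjoint id}, ∀ s ∈ c, s ⊆ ub := by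
    intro c hc hchain
    refine ⟨⋃₀ c, ⟨?_, ?_⟩, fun s hs => subset_sUnion_of_mem hs⟩
    · exact sUnion_subset fun s hs => (hc hs).1
    · intro x hx y hy hxy
      obtain ⟨s, hs, hxs⟩ := hx
      obtain ⟨t, ht, hyt⟩ := hy
      rcases hchain.total hs ht with h | h
      · exact (hc ht).2 (h hxs) hyt hxy
      · exact (hc hs).2 hxs (h hyt) hxy
  obtain ⟨I, hImax⟩ := zorn_subset {I | I ⊆ lev B n ∧ I.PairwiseDisjoint id} hzorn
  obtain ⟨⟨hIsub, hIdisj⟩, hmax⟩ := hImax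
  have hIcnt : I.Countable := by
    refine hccc I (fun u hu => ?_) hIdisj
    have := hGood u (hIsub hu).1
    exact ⟨this.1, this.2.1⟩
  have hcover : ∀ E ∈ lev B n, ∃ d ∈ I, (E ∩ d).Nonempty := by
    intro E hE
    by_contra h
    push_neg at h
    have hEI : E ∉ I := by
      intro hEI
      have h' := h E hEI
      rw [inter_self] at h'
      exact (hGood E hE.1).2.1.ne_empty h'
    have hins : insert E I ∈ {I | I ⊆ lev B n ∧ I.PairwiseDisjoint id} := by
      constructor
      · exact insert_subset hE hIsub
      · refine hIdisj.insert fun d hd hne => ?_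
        simpa using Set.disjoint_iff_inter_eq_empty.2 (h d hd)
    have := hmax hins (subset_insert E I)
    exact hEI (this (mem_insert E I))
  have hsub : lev B n ⊆ ⋃ d ∈ I,
      ({d} ∪ {E | E ∈ lev B n ∧ Prec d E ∧ (d ∩ E).Nonempty}
           ∪ {E | E ∈ lev B n ∧ Prec E d ∧ (E ∩ d).Nonempty}) := by
    intro E hE
    obtain ⟨d, hd, hmeet⟩ := hcover E hE
    refine mem_biUnion hd ?_
    by_cases hEd : E = d
    · exact Or.inl (Or.inl (by simp [hEd]))
    · rcases lev_total hGood hFin (hIsub hd) hE (fun h => hEd h.symm) with hp | hp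
      · exact Or.inl (Or.inr ⟨hE, hp, by rwa [inter_comm] at hmeet⟩)
      · exact Or.inr ⟨hE, hp, hmeet⟩
  refine Countable.mono hsub ?_
  refine hIcnt.biUnion fun d hd => ?_
  exact ((countable_singleton d).union
    (nplus_countable hGood hPi hFin (hIsub hd))).union
    (nminus_countable hGood hPi hFin (hIsub hd))

include hGood hPi hFin in
theorem B_countable (hccc : CCC X) : B.Countable := by
  have hsub : B ⊆ ⋃ n : ℕ, lev B n := fun C hC => mem_iUnion.2 ⟨(supp B C).ncard, hC, rfl⟩
  exact Countable.mono hsub (countable_iUnion fun n => lev_countable hGood hPi hFin hccc n)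

end Main

/-- If a ccc ordered space has a π-base in which every member has only finitely many
strict supersets, then it is separable. -/
theorem separable_of_finite_up (hccc : CCC X) (A : Set (Set X)) (hA : IsPiBase X A)
    (hfin : ∀ u ∈ A, {v | v ∈ A ∧ u ⊂ v}.Finite) :
    TopologicalSpace.SeparableSpace X := by
  obtain ⟨hA1, hA2⟩ := hA
  -- the π-base of order-connected components
  set B : Set (Set X) := {C | ∃ u ∈ A, ∃ x ∈ u, C = ordConnectedComponent u x} with hBdef
  have hGood : ∀ C ∈ B, IsOpen C ∧ C.Nonempty ∧ C.OrdConnected := by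
    rintro C ⟨u, hu, x, hx, rfl⟩
    exact ⟨isOpen_ordConnectedComponent' (hA1 u hu).1 x,
      nonempty_ordConnectedComponent.2 hx, inferInstance⟩
  have hPi : ∀ v : Set X, IsOpen v → v.Nonempty → ∃ C ∈ B, C ⊆ v := by
    intro v hv hvne
    obtain ⟨u, hu, huv⟩ := hA2 v hv hvne
    obtain ⟨x, hx⟩ := (hA1 u hu).2
    exact ⟨ordConnectedComponent u x, ⟨u, hu, x, hx, rfl⟩,
      (ordConnectedComponent_subset).trans huv⟩
  have hup : ∀ w ∈ A, {v | v ∈ A ∧ w ⊆ v}.Finite := by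
    intro w hw
    refine ((hfin w hw).insert w).subset ?_
    rintro v ⟨hv, hwv⟩
    rcases eq_or_ne v w with h | h
    · exact Or.inl h
    · exact Or.inr ⟨hv, ssubset_of_subset_of_ne hwv (Ne.symm h)⟩
  have hFin : ∀ C ∈ B, {D | D ∈ B ∧ C ⊆ D}.Finite := by
    intro C hC
    obtain ⟨hCo, hCne, _⟩ := hGood C hC
    obtain ⟨w, hw, hwC⟩ := hA2 C hCo hCne
    obtain ⟨x₀, hx₀⟩ := (hA1 w hw).2
    refine (((hup w hw).image fun v => ordConnectedComponent v x₀)).subset ?_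
    rintro D ⟨⟨u', hu', x', hx', rfl⟩, hCD⟩
    have hx₀D : x₀ ∈ ordConnectedComponent u' x' := hCD (hwC hx₀)
    refine ⟨u', ⟨hu', fun y hy => ordConnectedComponent_subset (hCD (hwC hy))⟩, ?_⟩
    exact (ordConnectedComponent_eq hx₀D).symm
  have hBcnt : B.Countable := B_countable hGood hPi hFin hccc
  have : Countable ↥B := hBcnt.to_subtype
  set g : ↥B → X := fun C => ((hGood C.1 C.2).2.1).some with hg
  refine ⟨⟨Set.range g, countable_range g, ?_⟩⟩
  rw [dense_iff_inter_open]
  intro U hU hUne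
  obtain ⟨C, hC, hCU⟩ := hPi U hU hUne
  exact ⟨g ⟨C, hC⟩, hCU ((hGood C hC).2.1).some_mem, mem_range_self _⟩

end SuslinPiNt

/-- If `X` is a Suslin line (a linearly ordered topological space which is ccc but not
separable), then in every π-base of `X` some member is contained in infinitely many
members; i.e. `πNt(X) ≥ ω₁`. -/
theorem suslin_line_piNt_ge_omega1 {X : Type u} [LinearOrder X] [TopologicalSpace X]
    [OrderTopology X] (hccc : CCC X) (hnonsep : ¬ TopologicalSpace.SeparableSpace X)
    (A : Set (Set X)) (hA : IsPiBase X A) :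
    ∃ u ∈ A, {v | v ∈ A ∧ u ⊂ v}.Infinite := by
  by_contra hcon
  push_neg at hcon
  exact hnonsep (SuslinPiNt.separable_of_finite_up hccc A hA hcon)
end

section
/- For every regular uncountable cardinal κ there exists a totally disconnected compact Hausdorff space X such that Nt(X) = κ and X has a P_κ-point. (Concretely, the closed subspace of 2^κ consisting of all f such that for every odd α < κ, either f(α) = 0 or f is identically 1 on α, has a κ^op-like base, and the constant-1 function is a P_κ-point.) -/
open Cardinal TopologicalSpace

/-- The Noetherian type of `X`: the least infinite `λ` such that `X` has a base in
which no member is (strictly) contained in `λ`-many members. -/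
noncomputable def noetherianType (X : Type u) [TopologicalSpace X] : Cardinal.{u} :=
  sInf {c | ℵ₀ ≤ c ∧ ∃ B : Set (Set X), IsTopologicalBasis B ∧
    ∀ u ∈ B, #{v : Set X // v ∈ B ∧ u ⊂ v} < c}

/-- `p` is a `P_κ`-point: the intersection of fewer than `κ`-many neighborhoods of `p`
always has `p` in its interior (i.e. is again a neighborhood of `p`). -/
def IsPkappaPoint {X : Type u} [TopologicalSpace X] (p : X) (κ : Cardinal.{u}) : Prop :=
  ∀ 𝒰 : Set (Set X), #𝒰 < κ → (∀ u ∈ 𝒰, u ∈ nhds p) → ⋂₀ 𝒰 ∈ nhds p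

/-!
A neighbourhood of the constant function `1` fixes finitely many coordinates, so it contains
`{f | f α = 1}` for some large odd `α`, which forces `f ≡ 1` below `α`. For fewer than `κ`
neighbourhoods, regularity of `κ` bounds these `α` by a single odd `β`, so `1` is a `P_κ`-point; it
is not isolated. In a `T₁` space, a non-isolated `P_κ`-point yields, in every base and for every
`c < κ`, a basic neighbourhood with at least `c` strict supersets in the base, so `κ ≤ Nt(X)`.

Conversely, take as base the cylinders fixing all coordinates on finitely many levels
`{2γ, 2γ + 1}`. If a basic `v` contains a cylinder `u` whose levels all lie below `δ`, then each
even coordinate `2γ` fixed by `v` is constant on `u`, so `γ < δ`: otherwise, zeroing a point of `u`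
from level `γ` on and then setting coordinate `2γ` to `1` gives two points of `u` that differ
there. Hence `v` is the cylinder through a point of `u` over a finite set of levels below `δ`, and
there are fewer than `κ` of those.
-/

open Set Filter Topology

theorem Cardinal.mk_finset_lt {α : Type u} {κ : Cardinal.{u}} (hκ : ℵ₀ ≤ κ) (hα : #α < κ) :
    #(Finset α) < κ := by
  cases finite_or_infinite α
  · exact (lt_aleph0_of_finite _).trans_le hκ
  · rwa [mk_finset_of_infinite]

section NoetherianType

variable {X : Type u} [TopologicalSpace X]

theorem noetherianType_le_of_isTopologicalBasis {B : Set (Set X)} (hB : IsTopologicalBasis B)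
    {c : Cardinal.{u}} (hc : ℵ₀ ≤ c) (h : ∀ u ∈ B, #{v : Set X // v ∈ B ∧ u ⊂ v} < c) :
    noetherianType X ≤ c :=
  csInf_le' ⟨hc, B, hB, h⟩

theorem le_noetherianType_of_forall_exists_le {κ : Cardinal.{u}}
    (h : ∀ B : Set (Set X), IsTopologicalBasis B →
      ∀ c < κ, ∃ u ∈ B, c ≤ #{v : Set X // v ∈ B ∧ u ⊂ v}) :
    κ ≤ noetherianType X := by
  have hopens : ∀ u ∈ {s : Set X | IsOpen s}, #{v : Set X // v ∈ {s | IsOpen s} ∧ u ⊂ v} <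
      ℵ₀ + 2 ^ #(Set X) := fun u _ =>
    calc _ ≤ #(Set X) := mk_subtype_le _
      _ < 2 ^ #(Set X) := cantor _
      _ ≤ _ := le_add_self
  refine le_csInf ⟨_, le_self_add, _, isTopologicalBasis_opens, hopens⟩ ?_
  rintro c ⟨-, B, hB, hc⟩
  by_contra! hcκ
  obtain ⟨u, hu, hle⟩ := h B hB c hcκ
  exact (hc u hu).not_ge hle

theorem TopologicalSpace.IsTopologicalBasis.exists_mem_ssubset_of_mem_nhds [T1Space X]
    {B : Set (Set X)} (hB : IsTopologicalBasis B) {p : X} (hp : (𝓝[≠] p).NeBot) {t : Set X}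
    (ht : t ∈ 𝓝 p) :
    ∃ w ∈ B, p ∈ w ∧ w ⊂ t := by
  obtain ⟨q, hqt, hqp⟩ := hp.nonempty_of_mem (inter_mem (mem_nhdsWithin_of_mem_nhds ht)
    self_mem_nhdsWithin)
  obtain ⟨w, hwB, hpw, hwt⟩ := hB.mem_nhds_iff.1 (inter_mem ht (compl_singleton_mem_nhds
    (Ne.symm hqp)))
  exact ⟨w, hwB, hpw, (ssubset_iff_of_subset (hwt.trans inter_subset_left)).2
    ⟨q, hqt, fun hqw => (hwt hqw).2 rfl⟩⟩

theorem IsPkappaPoint.exists_le_mk_ssuperset [T1Space X] {p : X} {κ : Cardinal.{u}}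
    (hpκ : IsPkappaPoint p κ) (hp : (𝓝[≠] p).NeBot) {B : Set (Set X)}
    (hB : IsTopologicalBasis B) {c : Cardinal.{u}} (hc : c < κ) :
    ∃ u ∈ B, c ≤ #{v : Set X // v ∈ B ∧ u ⊂ v} := by
  have hnhds : ∀ v ∈ {v ∈ B | p ∈ v}, v ∈ 𝓝 p := fun v hv => (hB.isOpen hv.1).mem_nhds hv.2
  have hc_le : c ≤ #{v ∈ B | p ∈ v} := by
    by_contra! hlt
    obtain ⟨w, hwB, hpw, hw⟩ :=
      hB.exists_mem_ssubset_of_mem_nhds hp (hpκ _ (hlt.trans hc) hnhds)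
    exact not_subset_of_ssubset hw (sInter_subset_of_mem ⟨hwB, hpw⟩)
  obtain ⟨S, hS, rfl⟩ := le_mk_iff_exists_subset.1 hc_le
  obtain ⟨w, hwB, -, hw⟩ :=
    hB.exists_mem_ssubset_of_mem_nhds hp (hpκ S hc fun v hv => hnhds v (hS hv))
  refine ⟨w, hwB, mk_le_of_injective (f := fun v : S =>
    ⟨v, (hS v.2).1, hw.trans_subset (sInter_subset_of_mem v.2)⟩) ?_⟩
  exact fun v v' h => Subtype.ext (congrArg Subtype.val h :)

theorem IsPkappaPoint.le_noetherianType [T1Space X] {p : X} {κ : Cardinal.{u}}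
    (hpκ : IsPkappaPoint p κ) (hp : (𝓝[≠] p).NeBot) : κ ≤ noetherianType X :=
  le_noetherianType_of_forall_exists_le fun _ hB _ hc => hpκ.exists_le_mk_ssuperset hp hB hc

end NoetherianType

namespace NoetherianCompactum

variable {κ : Cardinal.{u}}

variable (κ) in
abbrev Level : Type u := κ.ord.ToType

-- `Level κ ×ₗ Bool` has order type `κ`; `(γ, false)` and `(γ, true)` stand for the ordinals `2γ`
-- and `2γ + 1`, so the coordinates `oddCoord γ` are exactly the odd ordinals below `κ`.
variable (κ) in
abbrev Coord : Type u := Level κ ×ₗ Bool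

def level (j : Coord κ) : Level κ := (ofLex j).1

def evenCoord (w : Level κ) : Coord κ := toLex (w, false)

def oddCoord (w : Level κ) : Coord κ := toLex (w, true)

@[simp] lemma level_evenCoord (w : Level κ) : level (evenCoord w) = w := rfl

@[simp] lemma level_oddCoord (w : Level κ) : level (oddCoord w) = w := rfl

lemma monotone_level : Monotone (level (κ := κ)) := Prod.Lex.monotone_fst

lemma lt_oddCoord_of_level_lt {j : Coord κ} {w : Level κ} (h : level j < w) : j < oddCoord w :=
  Prod.Lex.lt_iff.2 (Or.inl h)

lemma exists_lt_of_mk_lt (hκ : κ.IsRegular) {s : Set (Level κ)} (hs : #s < κ) :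
    ∃ w, ∀ x ∈ s, x < w :=
  not_isCofinal_iff.1 fun h => (Order.cof_le h).not_gt (by rwa [Ordinal.cof_toType, hκ.cof_ord])

lemma mk_Iio_level_lt (w : Level κ) : #(Iio w) < κ := by
  simpa using Cardinal.mk_Iio_lt w

variable (κ) in
def carrier : Set (Coord κ → Bool) :=
  {f | ∀ w, ∀ j < oddCoord w, f (oddCoord w) = true → f j = true}

variable (κ) in
abbrev Space : Type u := carrier κ

lemma isClopen_setOf_apply_eq (j : Coord κ) (b : Bool) :
    IsClopen {f : Coord κ → Bool | f j = b} :=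
  (isClopen_discrete {b}).preimage (continuous_apply (A := fun _ => Bool) j)

lemma isClosed_carrier : IsClosed (carrier κ) := by
  simp only [carrier, ofPred_forall]
  refine isClosed_iInter fun w => isClosed_iInter fun j => isClosed_iInter fun _ =>
    isClosed_imp (isClopen_setOf_apply_eq _ _).isOpen (isClopen_setOf_apply_eq _ _).isClosed

lemma and_mem_carrier {f g : Coord κ → Bool} (hf : f ∈ carrier κ) (hg : g ∈ carrier κ) :
    (fun j => f j && g j) ∈ carrier κ := by
  intro w j hj h
  simp only [Bool.and_eq_true] at h ⊢
  exact ⟨hf w j hj h.1, hg w j hj h.2⟩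

open Classical in
noncomputable def levelIndicator (s : Set (Level κ)) : Coord κ → Bool :=
  fun j => decide (level j ∈ s)

lemma levelIndicator_mem_carrier {s : Set (Level κ)} (hs : IsLowerSet s) :
    levelIndicator s ∈ carrier κ := by
  intro w j hj h
  simp only [levelIndicator, decide_eq_true_eq] at h ⊢
  exact hs (monotone_level hj.le) h

lemma update_evenCoord_mem_carrier {f : Coord κ → Bool} (hf : f ∈ carrier κ) (w : Level κ) :
    Function.update f (evenCoord w) true ∈ carrier κ := by
  intro w' j hj h
  rw [Function.update_of_ne (by simp [evenCoord, oddCoord])] at h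
  rw [Function.update_apply]
  split_ifs
  · rfl
  · exact hf w' j hj h

instance : CompactSpace (Space κ) := isCompact_iff_compactSpace.1 isClosed_carrier.isCompact

def top : Space κ := ⟨fun _ => true, fun _ _ _ _ => rfl⟩

lemma isOpen_setOf_apply_eq (j : Coord κ) (b : Bool) : IsOpen {g : Space κ | g.1 j = b} :=
  (isClopen_setOf_apply_eq j b).isOpen.preimage continuous_subtype_val

def cyl (L : Finset (Level κ)) (f : Space κ) : Set (Space κ) :=
  {g | ∀ j, level j ∈ L → g.1 j = f.1 j}

lemma mem_cyl_self (L : Finset (Level κ)) (f : Space κ) : f ∈ cyl L f := fun _ _ => rfl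

lemma cyl_eq_of_mem {L : Finset (Level κ)} {f g : Space κ} (h : g ∈ cyl L f) :
    cyl L g = cyl L f := by
  ext g'
  exact forall₂_congr fun j hj => by rw [h j hj]

lemma isOpen_cyl (L : Finset (Level κ)) (f : Space κ) : IsOpen (cyl L f) := by
  have : cyl L f =
      ⋂ w ∈ L, ⋂ b : Bool, {g : Space κ | g.1 (toLex (w, b)) = f.1 (toLex (w, b))} := by
    ext g
    simp only [cyl, mem_ofPred_eq, mem_iInter]
    exact ⟨fun h w hw b => h _ hw, fun h j hj => toLex_ofLex j ▸ h _ hj _⟩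
  rw [this]
  exact isOpen_biInter_finset fun w _ => isOpen_iInter_of_finite fun b =>
    isOpen_setOf_apply_eq _ _

lemma exists_cyl_subset {f : Space κ} {u : Set (Space κ)} (hu : u ∈ 𝓝 f) :
    ∃ L, cyl L f ⊆ u := by
  obtain ⟨t, ht, htu⟩ := (mem_nhds_subtype _ _ _).1 hu
  rw [nhds_pi, mem_pi'] at ht
  obtain ⟨F, t', ht', hF⟩ := ht
  refine ⟨F.image level, fun g hg => htu (hF fun j hj => ?_)⟩
  rw [hg j (Finset.mem_image_of_mem _ hj)]
  exact mem_of_mem_nhds (ht' j)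

lemma exists_oddCoord_subset (hκ : κ.IsRegular) {u : Set (Space κ)} (hu : u ∈ 𝓝 top) :
    ∃ w, {g : Space κ | g.1 (oddCoord w) = true} ⊆ u := by
  obtain ⟨L, hL⟩ := exists_cyl_subset hu
  obtain ⟨w, hw⟩ := exists_lt_of_mk_lt hκ ((lt_aleph0_of_finite L).trans_le hκ.aleph0_le)
  exact ⟨w, fun g hg => hL fun j hj => g.2 w j (lt_oddCoord_of_level_lt (hw _ hj)) hg⟩

lemma isPkappaPoint_top (hκ : κ.IsRegular) : IsPkappaPoint (top : Space κ) κ := by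
  intro 𝒰 h𝒰 hnhds
  choose w hw using fun u : 𝒰 => exists_oddCoord_subset hκ (hnhds u u.2)
  obtain ⟨w₀, hw₀⟩ := exists_lt_of_mk_lt hκ (mk_range_le.trans_lt h𝒰)
  refine mem_of_superset ((isOpen_setOf_apply_eq (oddCoord w₀) true).mem_nhds rfl)
    fun g hg u hu => ?_
  exact hw ⟨u, hu⟩ (g.2 w₀ _ (lt_oddCoord_of_level_lt (hw₀ _ ⟨⟨u, hu⟩, rfl⟩)) hg)

lemma nhdsNE_top_neBot (hκ : κ.IsRegular) : (𝓝[≠] (top : Space κ)).NeBot := by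
  rw [← mem_closure_iff_nhdsWithin_neBot, mem_closure_iff_nhds]
  intro t ht
  obtain ⟨w, hw⟩ := exists_oddCoord_subset hκ ht
  obtain ⟨w', hw'⟩ := exists_lt_of_mk_lt hκ (s := {w}) (by
    simpa using one_lt_aleph0.trans_le hκ.aleph0_le)
  refine ⟨⟨levelIndicator (Iic w), levelIndicator_mem_carrier (isLowerSet_Iic w)⟩, hw ?_,
    fun h => ?_⟩
  · simp [levelIndicator]
  · have := congrArg (fun g : Space κ => g.1 (evenCoord w')) h
    simp only [levelIndicator, top, decide_eq_true_eq, level_evenCoord, mem_Iic] at this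
    exact this.not_gt (hw' w rfl)

lemma exists_le_of_forall_mem_cyl_eq {L : Finset (Level κ)} {f : Space κ} {w : Level κ}
    {b : Bool} (h : ∀ g ∈ cyl L f, g.1 (evenCoord w) = b) : ∃ w' ∈ L, w ≤ w' := by
  by_contra! hL
  let g₀ : Space κ := ⟨fun j => f.1 j && levelIndicator (Iio w) j,
    and_mem_carrier f.2 (levelIndicator_mem_carrier (isLowerSet_Iio w))⟩
  have hg₀ : g₀ ∈ cyl L f := fun j hj => by simp [g₀, levelIndicator, hL _ hj]
  let g₁ : Space κ := ⟨Function.update g₀.1 (evenCoord w) true,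
    update_evenCoord_mem_carrier g₀.2 w⟩
  have hg₁ : g₁ ∈ cyl L f := fun j hj => by
    rw [← hg₀ j hj]
    exact Function.update_of_ne (ne_of_apply_ne level (hL _ hj).ne) _ _
  have h₀ : g₀.1 (evenCoord w) = false := by simp [g₀, levelIndicator]
  have h₁ : g₁.1 (evenCoord w) = true := Function.update_self _ _ _
  refine Bool.false_ne_true ?_
  calc false = g₀.1 (evenCoord w) := h₀.symm
    _ = b := h g₀ hg₀
    _ = g₁.1 (evenCoord w) := (h g₁ hg₁).symm
    _ = true := h₁

variable (κ) in
def base : Set (Set (Space κ)) := {u | ∃ L f, cyl L f = u}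

lemma isTopologicalBasis_base : IsTopologicalBasis (base κ) := by
  refine isTopologicalBasis_of_isOpen_of_nhds (by rintro _ ⟨L, f, rfl⟩; exact isOpen_cyl L f) ?_
  intro f u hf hu
  obtain ⟨L, hL⟩ := exists_cyl_subset (hu.mem_nhds hf)
  exact ⟨_, ⟨L, f, rfl⟩, mem_cyl_self L f, hL⟩

lemma mk_ssuperset_cyl_lt (hκ : κ.IsRegular) (L : Finset (Level κ)) (f : Space κ) :
    #{v : Set (Space κ) // v ∈ base κ ∧ cyl L f ⊂ v} < κ := by
  obtain ⟨w₀, hw₀⟩ := exists_lt_of_mk_lt hκ ((lt_aleph0_of_finite L).trans_le hκ.aleph0_le)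
  have hsub : {v | v ∈ base κ ∧ cyl L f ⊂ v} ⊆
      range fun L' : Finset (Iio w₀) => cyl (L'.map (Function.Embedding.subtype _)) f := by
    rintro _ ⟨⟨L', f', rfl⟩, hsub⟩
    have hL' : ∀ w ∈ L', w ∈ Iio w₀ := fun w hw => by
      obtain ⟨w', hw', hle⟩ := exists_le_of_forall_mem_cyl_eq (b := f'.1 (evenCoord w))
        fun g hg => hsub.subset hg _ hw
      exact hle.trans_lt (hw₀ w' hw')
    classical
    refine ⟨L'.subtype (· ∈ Iio w₀), ?_⟩
    dsimp only
    rw [Finset.subtype_map_of_mem hL', cyl_eq_of_mem (hsub.subset (mem_cyl_self L f))]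
  calc #{v : Set (Space κ) // v ∈ base κ ∧ cyl L f ⊂ v}
      ≤ #(Finset (Iio w₀)) := (mk_le_mk_of_subset hsub).trans mk_range_le
    _ < κ := mk_finset_lt hκ.aleph0_le (mk_Iio_level_lt w₀)

theorem noetherianType_space (hκ : κ.IsRegular) : noetherianType (Space κ) = κ :=
  le_antisymm
    (noetherianType_le_of_isTopologicalBasis isTopologicalBasis_base hκ.aleph0_le
      (by rintro _ ⟨L, f, rfl⟩; exact mk_ssuperset_cyl_lt hκ L f))
    ((isPkappaPoint_top hκ).le_noetherianType (nhdsNE_top_neBot hκ))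

end NoetherianCompactum

theorem exists_compactum_noetherianType_eq_general (κ : Cardinal.{0})
    (hreg : κ.IsRegular) :
    ∃ (X : Type) (_ : TopologicalSpace X), CompactSpace X ∧ T2Space X ∧
      TotallyDisconnectedSpace X ∧ noetherianType X = κ ∧
      ∃ p : X, IsPkappaPoint p κ :=
  ⟨NoetherianCompactum.Space κ, inferInstance, inferInstance, inferInstance, inferInstance,
    NoetherianCompactum.noetherianType_space hreg, _, NoetherianCompactum.isPkappaPoint_top hreg⟩

/-- For every regular uncountable cardinal `κ` there is a totally disconnected compact
Hausdorff space `X` with `Nt(X) = κ` having a `P_κ`-point. -/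
theorem exists_compactum_noetherianType_eq (κ : Cardinal.{0})
    (hreg : κ.IsRegular) (huncount : ℵ₀ < κ) :
    ∃ (X : Type) (_ : TopologicalSpace X), CompactSpace X ∧ T2Space X ∧
      TotallyDisconnectedSpace X ∧ noetherianType X = κ ∧
      ∃ p : X, IsPkappaPoint p κ :=
  exists_compactum_noetherianType_eq_general κ hreg
end

section
/- Let λ < κ be infinite cardinals and let Y be the quotient of the disjoint union of 2^κ and 2^λ obtained by identifying the two all-zero sequences to a single point p. If λ < cf(κ) then Nt(Y) = κ⁺, and if λ ≥ cf(κ) then Nt(Y) = κ. -/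
open Cardinal TopologicalSpace

/-- The equivalence relation on `2^K ⊕ 2^L` identifying the two all-zero (all-`false`)
sequences to a single point and nothing else. -/
def glueZeroSetoid (K L : Type u) : Setoid ((K → Bool) ⊕ (L → Bool)) where
  r x y := x = y ∨
    ((x = Sum.inl (fun _ => false) ∨ x = Sum.inr (fun _ => false)) ∧
     (y = Sum.inl (fun _ => false) ∨ y = Sum.inr (fun _ => false)))
  iseqv := by
    constructor
    · intro x; exact Or.inl rfl
    · rintro x y (rfl | ⟨h₁, h₂⟩)
      · exact Or.inl rfl
      · exact Or.inr ⟨h₂, h₁⟩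
    · rintro x y z (rfl | ⟨h₁, h₂⟩) h
      · exact h
      · rcases h with rfl | ⟨h₃, h₄⟩
        · exact Or.inr ⟨h₁, h₂⟩
        · exact Or.inr ⟨h₁, h₄⟩

/-- The quotient of the disjoint union of `2^K` and `2^L` identifying the two all-zero
sequences; it carries the quotient topology of the sum of the product topologies. -/
def GlueSpace (K L : Type u) : Type u := Quotient (glueZeroSetoid K L)

instance (K L : Type u) : TopologicalSpace (GlueSpace K L) :=
  instTopologicalSpaceQuotient

/-! Let `p` be the glued point. Every base contains at least `κ` neighbourhoods of `p`, and each
of them contains a cylinder `[G = 0]` of `2^λ` for some finite `G ⊆ λ`. For a fixed `G`, a base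
member inside the cylinder `[G = 0, l = 1]` (`l ∉ G`) misses `p`, so it is strictly contained in
every neighbourhood of `p` assigned to `G`. Hence if every base member has fewer than `μ` strict
supersets, `κ` is a sum of `λ` cardinals below `μ`: this forces `μ > κ` when `λ < cf κ`, and
`μ ≥ κ` always.

Conversely, take the cylinders of `2^κ` and of `2^λ` avoiding `0`, and the neighbourhoods
`[F = 0] ∪ [G = 0]` of `p` for which `F ∈ C i` for some `i ∈ G`. A cylinder of `2^λ` with
support `t` lies only below neighbourhoods with `G ⊆ t`, hence with `F ∈ ⋃_{i ∈ t} C i`. Taking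
every `C i` to be all of `[κ]^{<ω}` gives `κ⁺`; when `cf κ ≤ λ`, `[κ]^{<ω}` is covered by `λ`
sets of size `< κ`, and taking these as the `C i` gives `κ`. -/

theorem noetherianType_eq_of_isTopologicalBasis {X : Type u} [TopologicalSpace X]
    {c : Cardinal.{u}} (hc : ℵ₀ ≤ c) {B : Set (Set X)} (hB : IsTopologicalBasis B)
    (hBc : ∀ u ∈ B, #{v // v ∈ B ∧ u ⊂ v} < c)
    (hmin : ∀ d : Cardinal.{u}, ∀ B' : Set (Set X), IsTopologicalBasis B' →
      (∀ u ∈ B', #{v // v ∈ B' ∧ u ⊂ v} < d) → c ≤ d) :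
    noetherianType X = c :=
  le_antisymm (csInf_le' ⟨hc, B, hB, hBc⟩)
    (le_csInf ⟨c, hc, B, hB, hBc⟩ fun _ ⟨_, B', hB', hd⟩ => hmin _ B' hB' hd)

theorem Cardinal.sum_lt_of_mk_lt_cof {ι : Type u} {f : ι → Cardinal.{u}} {κ : Cardinal.{u}}
    (hκ : ℵ₀ ≤ κ) (hι : #ι < κ.ord.cof) (hf : ∀ i, f i < κ) : sum f < κ :=
  (sum_le_mk_mul_iSup f).trans_lt <|
    mul_lt_of_lt hκ (hι.trans_le (Ordinal.cof_ord_le κ)) (iSup_lt_of_lt_cof_ord hι hf)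

theorem Cardinal.mk_biUnion_finset_lt {ι α : Type u} {C : ι → Set α} {κ : Cardinal.{u}}
    (hκ : ℵ₀ ≤ κ) (t : Finset ι) (hC : ∀ i, #(C i) < κ) : #(⋃ i ∈ t, C i) < κ := by
  rw [← Finset.set_biUnion_coe, Set.biUnion_eq_iUnion]
  refine mk_iUnion_le_sum_mk.trans_lt (sum_lt_of_mk_lt_cof hκ ?_ fun i => hC i)
  exact (lt_aleph0_of_finite _).trans_le
    (Ordinal.aleph0_le_cof_iff.2 (Ordinal.one_lt_cof_iff.2 (isSuccLimit_ord hκ)))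

theorem Cardinal.exists_cover_of_cof_le {X ι : Type u} [Infinite X] (h : (#X).ord.cof ≤ #ι) :
    ∃ C : ι → Set X, (∀ i, #(C i) < #X) ∧ ∀ x, ∃ i, x ∈ C i := by
  obtain ⟨E⟩ : Nonempty (X ≃ (#X).ord.ToType) := Cardinal.eq.1 (by rw [mk_toType, card_ord])
  obtain ⟨S, hS, hSX⟩ := Order.exists_cof_eq (#X).ord.ToType
  rw [Ordinal.cof_toType] at hSX
  obtain ⟨e⟩ := (le_def S ι).1 (hSX.trans_le h)
  have : Nonempty S := (hS (E (Classical.arbitrary X))).elim fun s hs => ⟨⟨s, hs.1⟩⟩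
  refine ⟨fun i => E ⁻¹' Set.Iic (Function.invFun e i : S).1, fun i => ?_, fun x => ?_⟩
  · have hmk : #(#X).ord.ToType = #X := by rw [mk_toType, card_ord]
    have hIio : #(Set.Iio (Function.invFun e i : S).1) < #X :=
      (mk_Iio_lt _ (by rw [hmk, Ordinal.type_toType])).trans_eq hmk
    rw [mk_preimage_equiv, ← Set.Iio_insert]
    exact mk_insert_le.trans_lt
      (add_lt_of_lt (aleph0_le_mk X) hIio (one_lt_aleph0.trans_le (aleph0_le_mk X)))
  · obtain ⟨s, hs, hxs⟩ := hS (E x)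
    exact ⟨e ⟨s, hs⟩, by simpa [Function.leftInverse_invFun e.injective ⟨s, hs⟩] using hxs⟩

lemma finite_setOf_subset_prod {α β : Type*} (a : Finset α) (b : Finset β) :
    {p : Finset α × Finset β | p.1 ⊆ a ∧ p.2 ⊆ b}.Finite :=
  (a.powerset.finite_toSet.prod b.powerset.finite_toSet).subset
    fun _ hp => ⟨Finset.mem_powerset.2 hp.1, Finset.mem_powerset.2 hp.2⟩

section BoolCylinder

variable {α : Type*}

def boolCylinder (s₀ s₁ : Finset α) : Set (α → Bool) :=
  {x | (∀ i ∈ s₀, x i = false) ∧ ∀ i ∈ s₁, x i = true}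

lemma bot_mem_boolCylinder (s : Finset α) : ⊥ ∈ boolCylinder s ∅ :=
  ⟨fun _ _ => rfl, by simp⟩

lemma bot_notMem_boolCylinder {s₀ s₁ : Finset α} (h : s₁.Nonempty) : ⊥ ∉ boolCylinder s₀ s₁ :=
  fun hx => by obtain ⟨i, hi⟩ := h; simpa using hx.2 i hi

lemma isOpen_boolCylinder (s₀ s₁ : Finset α) : IsOpen (boolCylinder s₀ s₁) := by
  simp only [boolCylinder, Set.ofPred_and, Set.ofPred_forall]
  have hopen (b : Bool) (i : α) : IsOpen {x : α → Bool | x i = b} :=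
    (isOpen_discrete {b}).preimage (continuous_apply (A := fun _ => Bool) i)
  exact (isOpen_biInter_finset fun i _ => hopen false i).inter
    (isOpen_biInter_finset fun i _ => hopen true i)

open scoped Classical in
lemma indicator_mem_boolCylinder {s₀ s₁ t : Finset α} (h₀ : Disjoint s₀ t) (h₁ : s₁ ⊆ t) :
    (fun i => decide (i ∈ t)) ∈ boolCylinder s₀ s₁ :=
  ⟨fun i hi => by simpa using Finset.disjoint_left.1 h₀ hi, fun i hi => by simpa using h₁ hi⟩

lemma disjoint_of_mem_boolCylinder {s₀ s₁ : Finset α} {x : α → Bool}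
    (hx : x ∈ boolCylinder s₀ s₁) : Disjoint s₀ s₁ :=
  Finset.disjoint_left.2 fun i h₀ h₁ => by simpa [hx.1 i h₀] using hx.2 i h₁

lemma boolCylinder_nonempty {s₀ s₁ : Finset α} (h : Disjoint s₀ s₁) :
    (boolCylinder s₀ s₁).Nonempty := by
  classical
  exact ⟨_, indicator_mem_boolCylinder h subset_rfl⟩

lemma boolCylinder_subset_boolCylinder {s₀ s₁ s₀' s₁' : Finset α} (h₀ : s₀' ⊆ s₀)
    (h₁ : s₁' ⊆ s₁) : boolCylinder s₀ s₁ ⊆ boolCylinder s₀' s₁' :=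
  fun _ hx => ⟨fun i hi => hx.1 i (h₀ hi), fun i hi => hx.2 i (h₁ hi)⟩

lemma boolCylinder_subset_boolCylinder_iff {s₀ s₁ s₀' s₁' : Finset α} (h : Disjoint s₀ s₁) :
    boolCylinder s₀ s₁ ⊆ boolCylinder s₀' s₁' ↔ s₀' ⊆ s₀ ∧ s₁' ⊆ s₁ := by
  classical
  refine ⟨fun hsub => ⟨fun k hk => ?_, fun k hk => ?_⟩,
    fun h' => boolCylinder_subset_boolCylinder h'.1 h'.2⟩
  · by_contra hks
    have hdisj : Disjoint s₀ (insert k s₁) := Finset.disjoint_insert_right.2 ⟨hks, h⟩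
    simpa using (hsub (indicator_mem_boolCylinder hdisj (Finset.subset_insert k s₁))).1 k hk
  · simpa using (hsub (indicator_mem_boolCylinder h subset_rfl)).2 k hk

lemma exists_boolCylinder_subset {A : Set (α → Bool)} (hA : IsOpen A) {x : α → Bool}
    (hx : x ∈ A) : ∃ s₀ s₁ : Finset α, x ∈ boolCylinder s₀ s₁ ∧ boolCylinder s₀ s₁ ⊆ A := by
  classical
  obtain ⟨I, u, hu, hsub⟩ := isOpen_pi_iff.1 hA x hx
  refine ⟨I.filter (x · = false), I.filter (x · = true), ⟨by simp, by simp⟩, fun y hy => hsub ?_⟩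
  intro i hi
  have hyx : y i = x i := by
    cases hxi : x i
    · exact hy.1 i (Finset.mem_filter.2 ⟨hi, hxi⟩)
    · exact hy.2 i (Finset.mem_filter.2 ⟨hi, hxi⟩)
  exact hyx ▸ (hu i hi).2

lemma exists_boolCylinder_subset_of_ne_bot {A : Set (α → Bool)} (hA : IsOpen A)
    {x : α → Bool} (hx : x ∈ A) (hx₀ : x ≠ ⊥) : ∃ s₀ s₁ : Finset α, s₁.Nonempty ∧
      x ∈ boolCylinder s₀ s₁ ∧ boolCylinder s₀ s₁ ⊆ A := by
  classical
  obtain ⟨k, hk⟩ : ∃ k, x k = true := by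
    by_contra! h
    exact hx₀ (funext fun i => by simpa using h i)
  obtain ⟨s₀, s₁, hxs, hsub⟩ := exists_boolCylinder_subset hA hx
  refine ⟨s₀, insert k s₁, Finset.insert_nonempty k s₁, ⟨hxs.1, ?_⟩, fun y hy => hsub ?_⟩
  · simpa [hk] using hxs.2
  · exact boolCylinder_subset_boolCylinder subset_rfl (Finset.subset_insert k s₁) hy

lemma exists_boolCylinder_bot_subset {A : Set (α → Bool)} (hA : IsOpen A) (h : ⊥ ∈ A) :
    ∃ s : Finset α, boolCylinder s ∅ ⊆ A := by
  obtain ⟨s₀, s₁, hxs, hsub⟩ := exists_boolCylinder_subset hA h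
  obtain rfl : s₁ = ∅ := by
    by_contra hne
    exact bot_notMem_boolCylinder (Finset.nonempty_iff_ne_empty.2 hne) hxs
  exact ⟨s₀, hsub⟩

end BoolCylinder

namespace GlueSpace

variable {K L : Type u}

def inl (x : K → Bool) : GlueSpace K L := Quotient.mk _ (Sum.inl x)

def inr (t : L → Bool) : GlueSpace K L := Quotient.mk _ (Sum.inr t)

def gluePoint : GlueSpace K L := inl ⊥

lemma inr_bot : (inr ⊥ : GlueSpace K L) = gluePoint :=
  Quotient.sound (Or.inr ⟨Or.inr rfl, Or.inl rfl⟩)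

lemma inl_injective : Function.Injective (inl : (K → Bool) → GlueSpace K L) := by
  intro x x' h
  rcases Quotient.exact h with h | ⟨h₁ | h₁, h₂ | h₂⟩ <;> simp_all

lemma inr_injective : Function.Injective (inr : (L → Bool) → GlueSpace K L) := by
  intro t t' h
  rcases Quotient.exact h with h | ⟨h₁ | h₁, h₂ | h₂⟩ <;> simp_all

lemma inl_eq_inr_iff {x : K → Bool} {t : L → Bool} :
    (inl x : GlueSpace K L) = inr t ↔ x = ⊥ ∧ t = ⊥ := by
  refine ⟨fun h => ?_, fun ⟨hx, ht⟩ => by rw [hx, ht, inr_bot, gluePoint]⟩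
  rcases Quotient.exact h with h | ⟨h₁ | h₁, h₂ | h₂⟩ <;> simp_all
  exact ⟨rfl, rfl⟩

lemma inl_or_inr (y : GlueSpace K L) : (∃ x, inl x = y) ∨ ∃ t, inr t = y := by
  induction y using Quotient.inductionOn with
  | h w => cases w with
    | inl x => exact Or.inl ⟨x, rfl⟩
    | inr t => exact Or.inr ⟨t, rfl⟩

lemma isOpen_iff {W : Set (GlueSpace K L)} :
    IsOpen W ↔ IsOpen (inl ⁻¹' W) ∧ IsOpen (inr ⁻¹' W) :=
  isOpen_sum_iff

def glue (A : Set (K → Bool)) (B : Set (L → Bool)) : Set (GlueSpace K L) := inl '' A ∪ inr '' B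

section Glue

/- The hypothesis `⊥ ∈ A ↔ ⊥ ∈ B` says that `glue A B` is saturated, so that `A` and `B` are
its two traces. -/

variable {A A' : Set (K → Bool)} {B B' : Set (L → Bool)}

lemma preimage_inl_glue (h : ⊥ ∈ A ↔ ⊥ ∈ B) : inl ⁻¹' glue A B = A := by
  ext x
  simp only [glue, Set.mem_preimage, Set.mem_union, Set.mem_image, inl_injective.eq_iff,
    exists_eq_right, or_iff_left_iff_imp]
  rintro ⟨t, ht, htx⟩
  obtain ⟨rfl, rfl⟩ := inl_eq_inr_iff.1 htx.symm
  exact h.2 ht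

lemma preimage_inr_glue (h : ⊥ ∈ A ↔ ⊥ ∈ B) : inr ⁻¹' glue A B = B := by
  ext t
  simp only [glue, Set.mem_preimage, Set.mem_union, Set.mem_image, inr_injective.eq_iff,
    exists_eq_right, or_iff_right_iff_imp]
  rintro ⟨x, hx, hxt⟩
  obtain ⟨rfl, rfl⟩ := inl_eq_inr_iff.1 hxt
  exact h.1 hx

lemma glue_subset_iff {W : Set (GlueSpace K L)} :
    glue A B ⊆ W ↔ A ⊆ inl ⁻¹' W ∧ B ⊆ inr ⁻¹' W := by
  simp only [glue, Set.union_subset_iff, Set.image_subset_iff]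

lemma glue_subset_glue_iff (h : ⊥ ∈ A' ↔ ⊥ ∈ B') :
    glue A B ⊆ glue A' B' ↔ A ⊆ A' ∧ B ⊆ B' := by
  rw [glue_subset_iff, preimage_inl_glue h, preimage_inr_glue h]

lemma isOpen_glue (hA : IsOpen A) (hB : IsOpen B) (h : ⊥ ∈ A ↔ ⊥ ∈ B) : IsOpen (glue A B) := by
  rw [isOpen_iff, preimage_inl_glue h, preimage_inr_glue h]
  exact ⟨hA, hB⟩

lemma gluePoint_mem_glue_iff (h : ⊥ ∈ A ↔ ⊥ ∈ B) : gluePoint ∈ glue A B ↔ ⊥ ∈ A := by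
  rw [gluePoint, ← Set.mem_preimage, preimage_inl_glue h]

end Glue

def leftCylinder (s : Finset K × Finset K) : Set (GlueSpace K L) := glue (boolCylinder s.1 s.2) ∅

def rightCylinder (t : Finset L × Finset L) : Set (GlueSpace K L) := glue ∅ (boolCylinder t.1 t.2)

def pointCylinder (q : Finset K × Finset L) : Set (GlueSpace K L) :=
  glue (boolCylinder q.1 ∅) (boolCylinder q.2 ∅)

section Cylinders

variable {s : Finset K × Finset K} {t : Finset L × Finset L} {q : Finset K × Finset L}

lemma bot_mem_iff_of_leftCylinder (hs : s.2.Nonempty) :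
    ⊥ ∈ boolCylinder s.1 s.2 ↔ ⊥ ∈ (∅ : Set (L → Bool)) :=
  iff_of_false (bot_notMem_boolCylinder hs) id

lemma bot_mem_iff_of_rightCylinder (ht : t.2.Nonempty) :
    ⊥ ∈ (∅ : Set (K → Bool)) ↔ ⊥ ∈ boolCylinder t.1 t.2 :=
  iff_of_false id (bot_notMem_boolCylinder ht)

lemma bot_mem_iff_of_pointCylinder :
    ⊥ ∈ boolCylinder q.1 ∅ ↔ ⊥ ∈ boolCylinder q.2 ∅ :=
  iff_of_true (bot_mem_boolCylinder _) (bot_mem_boolCylinder _)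

lemma isOpen_leftCylinder (hs : s.2.Nonempty) : IsOpen (leftCylinder s : Set (GlueSpace K L)) :=
  isOpen_glue (isOpen_boolCylinder _ _) isOpen_empty (bot_mem_iff_of_leftCylinder hs)

lemma isOpen_rightCylinder (ht : t.2.Nonempty) : IsOpen (rightCylinder t : Set (GlueSpace K L)) :=
  isOpen_glue isOpen_empty (isOpen_boolCylinder _ _) (bot_mem_iff_of_rightCylinder ht)

lemma isOpen_pointCylinder : IsOpen (pointCylinder q) :=
  isOpen_glue (isOpen_boolCylinder _ _) (isOpen_boolCylinder _ _) bot_mem_iff_of_pointCylinder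

lemma preimage_inl_pointCylinder : inl ⁻¹' pointCylinder q = boolCylinder q.1 ∅ :=
  preimage_inl_glue bot_mem_iff_of_pointCylinder

lemma gluePoint_mem_pointCylinder : gluePoint ∈ pointCylinder q :=
  (gluePoint_mem_glue_iff bot_mem_iff_of_pointCylinder).2 (bot_mem_boolCylinder _)

lemma gluePoint_notMem_rightCylinder (ht : t.2.Nonempty) :
    gluePoint ∉ (rightCylinder t : Set (GlueSpace K L)) :=
  fun h => (gluePoint_mem_glue_iff (bot_mem_iff_of_rightCylinder ht)).1 h

variable {s' : Finset K × Finset K} {t' : Finset L × Finset L} {q' : Finset K × Finset L}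

lemma leftCylinder_subset_leftCylinder_iff (hs : Disjoint s.1 s.2) (hs' : s'.2.Nonempty) :
    (leftCylinder s : Set (GlueSpace K L)) ⊆ leftCylinder s' ↔ s'.1 ⊆ s.1 ∧ s'.2 ⊆ s.2 := by
  rw [leftCylinder, leftCylinder, glue_subset_glue_iff (bot_mem_iff_of_leftCylinder hs'),
    boolCylinder_subset_boolCylinder_iff hs, and_iff_left (Set.empty_subset _)]

lemma rightCylinder_subset_rightCylinder_iff (ht : Disjoint t.1 t.2) (ht' : t'.2.Nonempty) :
    (rightCylinder t : Set (GlueSpace K L)) ⊆ rightCylinder t' ↔ t'.1 ⊆ t.1 ∧ t'.2 ⊆ t.2 := by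
  rw [rightCylinder, rightCylinder, glue_subset_glue_iff (bot_mem_iff_of_rightCylinder ht'),
    boolCylinder_subset_boolCylinder_iff ht, and_iff_right (Set.empty_subset _)]

lemma pointCylinder_subset_pointCylinder_iff :
    pointCylinder q ⊆ pointCylinder q' ↔ q'.1 ⊆ q.1 ∧ q'.2 ⊆ q.2 := by
  rw [pointCylinder, pointCylinder, glue_subset_glue_iff bot_mem_iff_of_pointCylinder,
    boolCylinder_subset_boolCylinder_iff (Finset.disjoint_empty_right _),
    boolCylinder_subset_boolCylinder_iff (Finset.disjoint_empty_right _)]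
  simp

lemma leftCylinder_subset_pointCylinder_iff (hs : Disjoint s.1 s.2) :
    leftCylinder s ⊆ pointCylinder q ↔ q.1 ⊆ s.1 := by
  rw [leftCylinder, pointCylinder, glue_subset_glue_iff bot_mem_iff_of_pointCylinder,
    boolCylinder_subset_boolCylinder_iff hs]
  simp

lemma rightCylinder_subset_pointCylinder_iff (ht : Disjoint t.1 t.2) :
    rightCylinder t ⊆ pointCylinder q ↔ q.2 ⊆ t.1 := by
  rw [rightCylinder, pointCylinder, glue_subset_glue_iff bot_mem_iff_of_pointCylinder,
    boolCylinder_subset_boolCylinder_iff ht]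
  simp

lemma not_rightCylinder_subset_leftCylinder (ht : Disjoint t.1 t.2) (hs : s.2.Nonempty) :
    ¬ rightCylinder t ⊆ leftCylinder s := fun h =>
  ((glue_subset_glue_iff (bot_mem_iff_of_leftCylinder hs)).1 h).2
    (boolCylinder_nonempty ht).some_mem

lemma not_leftCylinder_subset_rightCylinder (hs : Disjoint s.1 s.2) (ht : t.2.Nonempty) :
    ¬ leftCylinder s ⊆ rightCylinder t := fun h =>
  ((glue_subset_glue_iff (bot_mem_iff_of_rightCylinder ht)).1 h).1
    (boolCylinder_nonempty hs).some_mem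

lemma not_pointCylinder_subset_leftCylinder (hs : s.2.Nonempty) :
    ¬ pointCylinder q ⊆ leftCylinder s := fun h =>
  ((glue_subset_glue_iff (bot_mem_iff_of_leftCylinder hs)).1 h).2 (bot_mem_boolCylinder q.2)

lemma not_pointCylinder_subset_rightCylinder (ht : t.2.Nonempty) :
    ¬ pointCylinder q ⊆ rightCylinder t := fun h =>
  ((glue_subset_glue_iff (bot_mem_iff_of_rightCylinder ht)).1 h).1 (bot_mem_boolCylinder q.1)

end Cylinders

variable (C : L → Set (Finset K))

def cylinderBase : Set (Set (GlueSpace K L)) :=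
  leftCylinder '' {s | Disjoint s.1 s.2 ∧ s.2.Nonempty} ∪
  rightCylinder '' {t | Disjoint t.1 t.2 ∧ t.2.Nonempty} ∪
  pointCylinder '' {q | ∃ i ∈ q.2, q.1 ∈ C i}

variable {C}

theorem isTopologicalBasis_cylinderBase (hC : ∀ F, ∃ i, F ∈ C i) :
    IsTopologicalBasis (cylinderBase C : Set (Set (GlueSpace K L))) := by
  classical
  refine isTopologicalBasis_of_isOpen_of_nhds ?_ fun y W hyW hW => ?_
  · rintro _ ((⟨s, ⟨-, hs⟩, rfl⟩ | ⟨t, ⟨-, ht⟩, rfl⟩) | ⟨q, -, rfl⟩)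
    · exact isOpen_leftCylinder hs
    · exact isOpen_rightCylinder ht
    · exact isOpen_pointCylinder
  obtain ⟨hA, hB⟩ := isOpen_iff.1 hW
  by_cases hy : y = gluePoint
  · subst hy
    obtain ⟨F, hF⟩ := exists_boolCylinder_bot_subset hA hyW
    obtain ⟨G, hG⟩ := exists_boolCylinder_bot_subset hB (by rwa [Set.mem_preimage, inr_bot])
    obtain ⟨i, hi⟩ := hC F
    exact ⟨pointCylinder (F, insert i G), Or.inr ⟨_, ⟨i, Finset.mem_insert_self i G, hi⟩, rfl⟩,
      gluePoint_mem_pointCylinder, glue_subset_iff.2 ⟨hF,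
        (boolCylinder_subset_boolCylinder (Finset.subset_insert i G) subset_rfl).trans hG⟩⟩
  rcases inl_or_inr y with ⟨x, rfl⟩ | ⟨t, rfl⟩
  · obtain ⟨s₀, s₁, hs₁, hxs, hsub⟩ :=
      exists_boolCylinder_subset_of_ne_bot hA hyW (mt (congrArg inl) hy)
    exact ⟨leftCylinder (s₀, s₁),
      Or.inl (Or.inl ⟨_, ⟨disjoint_of_mem_boolCylinder hxs, hs₁⟩, rfl⟩), Or.inl ⟨x, hxs, rfl⟩,
      glue_subset_iff.2 ⟨hsub, Set.empty_subset _⟩⟩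
  · obtain ⟨t₀, t₁, ht₁, hts, hsub⟩ :=
      exists_boolCylinder_subset_of_ne_bot hB hyW (mt (fun h => h ▸ inr_bot) hy)
    exact ⟨rightCylinder (t₀, t₁),
      Or.inl (Or.inr ⟨_, ⟨disjoint_of_mem_boolCylinder hts, ht₁⟩, rfl⟩), Or.inr ⟨t, hts, rfl⟩,
      glue_subset_iff.2 ⟨Set.empty_subset _, hsub⟩⟩

section Counting

variable {u : Set (GlueSpace K L)}

theorem finite_leftCylinder_supersets (hu : u ∈ cylinderBase C) :
    {s | (Disjoint s.1 s.2 ∧ s.2.Nonempty) ∧ u ⊆ leftCylinder s}.Finite := by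
  rcases hu with (⟨s₀, ⟨hd, -⟩, rfl⟩ | ⟨t₀, ⟨hd, -⟩, rfl⟩) | ⟨q₀, -, rfl⟩
  · exact (finite_setOf_subset_prod s₀.1 s₀.2).subset fun s ⟨⟨_, hs⟩, h⟩ =>
      (leftCylinder_subset_leftCylinder_iff hd hs).1 h
  · exact Set.finite_empty.subset fun s ⟨⟨_, hs⟩, h⟩ =>
      not_rightCylinder_subset_leftCylinder hd hs h
  · exact Set.finite_empty.subset fun s ⟨⟨_, hs⟩, h⟩ => not_pointCylinder_subset_leftCylinder hs h

theorem finite_rightCylinder_supersets (hu : u ∈ cylinderBase C) :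
    {t | (Disjoint t.1 t.2 ∧ t.2.Nonempty) ∧ u ⊆ rightCylinder t}.Finite := by
  rcases hu with (⟨s₀, ⟨hd, -⟩, rfl⟩ | ⟨t₀, ⟨hd, -⟩, rfl⟩) | ⟨q₀, -, rfl⟩
  · exact Set.finite_empty.subset fun t ⟨⟨_, ht⟩, h⟩ =>
      not_leftCylinder_subset_rightCylinder hd ht h
  · exact (finite_setOf_subset_prod t₀.1 t₀.2).subset fun t ⟨⟨_, ht⟩, h⟩ =>
      (rightCylinder_subset_rightCylinder_iff hd ht).1 h
  · exact Set.finite_empty.subset fun t ⟨⟨_, ht⟩, h⟩ => not_pointCylinder_subset_rightCylinder ht h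

theorem mk_pointCylinder_supersets_lt {μ : Cardinal.{u}} (hμ : ℵ₀ ≤ μ) (hL : #(Finset L) < μ)
    (hC : ∀ i, #(C i) < μ) (hu : u ∈ cylinderBase C) :
    #{q | (∃ i ∈ q.2, q.1 ∈ C i) ∧ u ⊆ pointCylinder q} < μ := by
  rcases hu with (⟨s₀, ⟨hd, -⟩, rfl⟩ | ⟨t₀, ⟨hd, -⟩, rfl⟩) | ⟨q₀, -, rfl⟩
  · have hsub : {q | (∃ i ∈ q.2, q.1 ∈ C i) ∧ leftCylinder s₀ ⊆ pointCylinder q} ⊆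
        (s₀.1.powerset : Set (Finset K)) ×ˢ Set.univ := fun q ⟨_, h⟩ =>
      ⟨Finset.mem_powerset.2 ((leftCylinder_subset_pointCylinder_iff hd).1 h), trivial⟩
    refine (mk_le_mk_of_subset hsub).trans_lt ?_
    rw [mk_setProd, mk_univ]
    exact mul_lt_of_lt hμ ((Set.toFinite _).lt_aleph0.trans_le hμ) hL
  · have hsub : {q | (∃ i ∈ q.2, q.1 ∈ C i) ∧ rightCylinder t₀ ⊆ pointCylinder q} ⊆
        (⋃ i ∈ t₀.1, C i) ×ˢ (t₀.1.powerset : Set (Finset L)) := fun q ⟨⟨i, hi, hiq⟩, h⟩ => by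
      have hq := (rightCylinder_subset_pointCylinder_iff hd).1 h
      exact ⟨Set.mem_biUnion (hq hi) hiq, Finset.mem_powerset.2 hq⟩
    refine (mk_le_mk_of_subset hsub).trans_lt ?_
    rw [mk_setProd]
    exact mul_lt_of_lt hμ (mk_biUnion_finset_lt hμ t₀.1 hC)
      ((Set.toFinite _).lt_aleph0.trans_le hμ)
  · refine (Set.Finite.lt_aleph0 ?_).trans_le hμ
    exact (finite_setOf_subset_prod q₀.1 q₀.2).subset fun q ⟨_, h⟩ =>
      pointCylinder_subset_pointCylinder_iff.1 h

theorem mk_ssupersets_lt {μ : Cardinal.{u}} (hμ : ℵ₀ ≤ μ) (hL : #(Finset L) < μ)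
    (hC : ∀ i, #(C i) < μ) (hu : u ∈ cylinderBase C) :
    #{v // v ∈ cylinderBase C ∧ u ⊂ v} < μ := by
  have hsub : {v | v ∈ cylinderBase C ∧ u ⊂ v} ⊆
      leftCylinder '' {s | (Disjoint s.1 s.2 ∧ s.2.Nonempty) ∧ u ⊆ leftCylinder s} ∪
      rightCylinder '' {t | (Disjoint t.1 t.2 ∧ t.2.Nonempty) ∧ u ⊆ rightCylinder t} ∪
      pointCylinder '' {q | (∃ i ∈ q.2, q.1 ∈ C i) ∧ u ⊆ pointCylinder q} := by
    rintro _ ⟨(⟨s, hs, rfl⟩ | ⟨t, ht, rfl⟩) | ⟨q, hq, rfl⟩, huv⟩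
    · exact Or.inl (Or.inl ⟨s, ⟨hs, huv.subset⟩, rfl⟩)
    · exact Or.inl (Or.inr ⟨t, ⟨ht, huv.subset⟩, rfl⟩)
    · exact Or.inr ⟨q, ⟨hq, huv.subset⟩, rfl⟩
  refine (mk_le_mk_of_subset hsub).trans_lt <| (mk_union_le _ _).trans_lt <|
    add_lt_of_lt hμ ((mk_union_le _ _).trans_lt <| add_lt_of_lt hμ ?_ ?_) ?_
  · exact mk_image_le.trans_lt ((finite_leftCylinder_supersets hu).lt_aleph0.trans_le hμ)
  · exact mk_image_le.trans_lt ((finite_rightCylinder_supersets hu).lt_aleph0.trans_le hμ)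
  · exact mk_image_le.trans_lt (mk_pointCylinder_supersets_lt hμ hL hC hu)

end Counting

section LowerBound

variable {B : Set (Set (GlueSpace K L))}

theorem le_mk_basis_gluePoint (hK : ℵ₀ < #K) (hB : IsTopologicalBasis B) :
    #K ≤ #{v // v ∈ B ∧ gluePoint ∈ v} := by
  by_contra! hlt
  choose F hF using fun v : {v // v ∈ B ∧ gluePoint ∈ v} =>
    exists_boolCylinder_bot_subset (isOpen_iff.1 (hB.isOpen v.2.1)).1 v.2.2
  have hsmall : #(⋃ v, (F v : Set K)) < #K :=
    (mk_iUnion_le _).trans_lt <| mul_lt_of_lt hK.le hlt <|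
      (ciSup_le' fun v => (F v).finite_toSet.lt_aleph0.le).trans_lt hK
  obtain ⟨k, hk⟩ : (⋃ v, (F v : Set K))ᶜ.Nonempty := by
    rw [Set.nonempty_compl]
    intro h
    rw [h, mk_univ] at hsmall
    exact hsmall.false
  obtain ⟨v, hvB, hpv, hvW⟩ := hB.exists_subset_of_mem_open
    (gluePoint_mem_pointCylinder (q := ({k}, ∅))) isOpen_pointCylinder
  have hFk : boolCylinder (F ⟨v, hvB, hpv⟩) ∅ ⊆ boolCylinder {k} ∅ :=
    (hF _).trans ((Set.preimage_mono hvW).trans preimage_inl_pointCylinder.subset)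
  exact hk (Set.mem_iUnion.2 ⟨_, Finset.singleton_subset_iff.1
    ((boolCylinder_subset_boolCylinder_iff (Finset.disjoint_empty_right _)).1 hFk).1⟩)

theorem mk_basis_gluePoint_supersets_lt [Infinite L] (hB : IsTopologicalBasis B) {c : Cardinal}
    (hc : ∀ u ∈ B, #{v // v ∈ B ∧ u ⊂ v} < c) (G : Finset L) :
    #{v // v ∈ B ∧ gluePoint ∈ v ∧ boolCylinder G ∅ ⊆ inr ⁻¹' v} < c := by
  obtain ⟨l, hl⟩ := Infinite.exists_notMem_finset G
  obtain ⟨t, ht⟩ := boolCylinder_nonempty (Finset.disjoint_singleton_right.2 hl)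
  obtain ⟨u, huB, -, huO⟩ := hB.exists_subset_of_mem_open
    (Or.inr ⟨t, ht, rfl⟩ : inr t ∈ rightCylinder (G, {l}))
    (isOpen_rightCylinder (Finset.singleton_nonempty l))
  refine (mk_le_mk_of_subset ?_).trans_lt (hc u huB)
  rintro v ⟨hvB, hpv, hGv⟩
  have huv : u ⊆ v := huO.trans <| glue_subset_iff.2 ⟨Set.empty_subset _,
    (boolCylinder_subset_boolCylinder subset_rfl (Finset.empty_subset _)).trans hGv⟩
  exact ⟨hvB, (Set.ssubset_iff_of_subset huv).2 ⟨gluePoint, hpv,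
    fun h => gluePoint_notMem_rightCylinder (Finset.singleton_nonempty l) (huO h)⟩⟩

theorem exists_le_sum_of_supersets_lt [Infinite L] (hK : ℵ₀ < #K) (hB : IsTopologicalBasis B)
    {c : Cardinal} (hc : ∀ u ∈ B, #{v // v ∈ B ∧ u ⊂ v} < c) :
    ∃ f : Finset L → Cardinal, (∀ G, f G < c) ∧ #K ≤ sum f := by
  refine ⟨fun G => #{v // v ∈ B ∧ gluePoint ∈ v ∧ boolCylinder G ∅ ⊆ inr ⁻¹' v},
    mk_basis_gluePoint_supersets_lt hB hc, (le_mk_basis_gluePoint hK hB).trans <|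
      (mk_le_mk_of_subset ?_).trans mk_iUnion_le_sum_mk⟩
  rintro v ⟨hvB, hpv⟩
  obtain ⟨G, hG⟩ := exists_boolCylinder_bot_subset (isOpen_iff.1 (hB.isOpen hvB)).2
    (show inr ⊥ ∈ v by rwa [inr_bot])
  exact Set.mem_iUnion.2 ⟨G, hvB, hpv, hG⟩

end LowerBound

end GlueSpace

open GlueSpace in
theorem noetherianType_glueSpace_general (K L : Type u) [Infinite L]
    (hlt : #L < #K) :
    (#L < (#K).ord.cof → noetherianType (GlueSpace K L) = Order.succ #K) ∧
    ((#K).ord.cof ≤ #L → noetherianType (GlueSpace K L) = #K) := by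
  have hK : ℵ₀ < #K := (aleph0_le_mk L).trans_lt hlt
  have : Infinite K := infinite_iff.2 hK.le
  have hLK : #(Finset L) < #K := by rwa [mk_finset_of_infinite]
  refine ⟨fun hcof => ?_, fun hcof => ?_⟩
  · have hsucc : ℵ₀ ≤ Order.succ #K := hK.le.trans (Order.le_succ _)
    refine noetherianType_eq_of_isTopologicalBasis hsucc
      (isTopologicalBasis_cylinderBase (C := fun _ => Set.univ)
        fun _ => ⟨Classical.arbitrary L, trivial⟩)
      (fun u hu => mk_ssupersets_lt hsucc (hLK.trans (Order.lt_succ _))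
        (fun _ => by simp) hu)
      fun d B hB hd => Order.succ_le_of_lt (lt_of_not_ge fun hdK => ?_)
    obtain ⟨f, hf, hKf⟩ := exists_le_sum_of_supersets_lt hK hB hd
    exact hKf.not_gt (sum_lt_of_mk_lt_cof hK.le (by rwa [mk_finset_of_infinite])
      fun G => (hf G).trans_le hdK)
  · obtain ⟨C, hC, hcover⟩ :=
      exists_cover_of_cof_le (X := Finset K) (ι := L) (by rwa [mk_finset_of_infinite])
    rw [mk_finset_of_infinite] at hC
    refine noetherianType_eq_of_isTopologicalBasis hK.le (isTopologicalBasis_cylinderBase hcover)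
      (fun u hu => mk_ssupersets_lt hK.le hLK hC hu) fun d B hB hd => le_of_not_gt fun hdK => ?_
    obtain ⟨f, hf, hKf⟩ := exists_le_sum_of_supersets_lt hK hB hd
    exact hKf.not_gt <| (sum_le_mk_mul_iSup f).trans_lt <|
      mul_lt_of_lt hK.le hLK ((ciSup_le' fun G => (hf G).le).trans_lt hdK)

/-- Let `λ = #L < #K = κ` be infinite cardinals and let `Y` be the quotient of
`2^κ ⊕ 2^λ` identifying the two all-zero points.  If `λ < cf κ` then `Nt(Y) = κ⁺`,
and if `λ ≥ cf κ` then `Nt(Y) = κ`. -/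
theorem noetherianType_glueSpace (K L : Type u) [Infinite K] [Infinite L]
    (hlt : #L < #K) :
    (#L < (#K).ord.cof → noetherianType (GlueSpace K L) = Order.succ #K) ∧
    ((#K).ord.cof ≤ #L → noetherianType (GlueSpace K L) = #K) :=
  noetherianType_glueSpace_general K L hlt
end

section
/- Suppose E is a subset of a topological space X with no finite neighborhood base. Then the local Noetherian type χNt(E,X) is the least infinite κ for which there exists a family U of χ(E,X)-many open neighborhoods of E such that for every subfamily V ⊆ U of size κ, E is not contained in the interior of ⋂V. -/
open Cardinal

variable {X : Type u} [TopologicalSpace X]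

/-- `A` is a neighborhood base of the set `E` in `X`. -/
def IsNbhdBase (E : Set X) (A : Set (Set X)) : Prop :=
  (∀ u ∈ A, IsOpen u ∧ E ⊆ u) ∧ ∀ v : Set X, IsOpen v → E ⊆ v → ∃ u ∈ A, u ⊆ v

/-- The character `χ(E,X)`: the least cardinality of a neighborhood base of `E`. -/
noncomputable def charSet (E : Set X) : Cardinal.{u} :=
  sInf {c | ∃ A : Set (Set X), IsNbhdBase E A ∧ c = #A}

/-- The local Noetherian type `χNt(E,X)`: the least infinite `κ` such that `E` has a
neighborhood base in which no member is (strictly) contained in `κ`-many members. -/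
noncomputable def locNt (E : Set X) : Cardinal.{u} :=
  sInf {κ | ℵ₀ ≤ κ ∧ ∃ A : Set (Set X), IsNbhdBase E A ∧
    ∀ u ∈ A, #{v : Set X // v ∈ A ∧ u ⊂ v} < κ}

/-- `U` is a local `⟨λ,κ⟩`-splitter at `E`: a family of `λ`-many open neighborhoods of
`E` such that `E` is not in the interior of the intersection of any `κ`-many of them. -/
def IsLocalSplitter (E : Set X) (U : Set (Set X)) (lam κ : Cardinal.{u}) : Prop :=
  (∀ u ∈ U, IsOpen u ∧ E ⊆ u) ∧ #U = lam ∧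
    ∀ V ⊆ U, #V = κ → ¬ E ⊆ interior (⋂₀ V)

lemma isNbhdBase_univ (E : Set X) : IsNbhdBase E {v | IsOpen v ∧ E ⊆ v} :=
  ⟨fun _ hu => hu, fun v hv hEv => ⟨v, ⟨hv, hEv⟩, subset_rfl⟩⟩

lemma exists_base_card_eq_char (E : Set X) :
    ∃ B : Set (Set X), IsNbhdBase E B ∧ #B = charSet E := by
  have hne : {c | ∃ A : Set (Set X), IsNbhdBase E A ∧ c = #A}.Nonempty :=
    ⟨_, _, isNbhdBase_univ E, rfl⟩
  obtain ⟨A, hA, hc⟩ := csInf_mem hne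
  exact ⟨A, hA, hc.symm⟩

lemma charSet_le {E : Set X} {A : Set (Set X)} (hA : IsNbhdBase E A) :
    charSet E ≤ #A := csInf_le' ⟨A, hA, rfl⟩

/-- If `E ⊆ X` has no finite neighborhood base, then `χNt(E,X)` is the least infinite
`κ` for which there is a local `⟨χ(E,X), κ⟩`-splitter at `E`. -/
theorem locNt_eq_least_splitter (E : Set X)
    (hnofin : ¬ ∃ A : Set (Set X), IsNbhdBase E A ∧ A.Finite) :
    locNt E = sInf {κ | ℵ₀ ≤ κ ∧
      ∃ U : Set (Set X), IsLocalSplitter E U (charSet E) κ} := by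
  have hsets : {κ : Cardinal.{u} | ℵ₀ ≤ κ ∧ ∃ A : Set (Set X), IsNbhdBase E A ∧
      ∀ u ∈ A, #{v : Set X // v ∈ A ∧ u ⊂ v} < κ} =
      {κ : Cardinal.{u} | ℵ₀ ≤ κ ∧
        ∃ U : Set (Set X), IsLocalSplitter E U (charSet E) κ} := by
    ext κ
    constructor
    · rintro ⟨hκ, A, hA, hcount⟩
      refine ⟨hκ, ?_⟩
      obtain ⟨B, hB, hBc⟩ := exists_base_card_eq_char E
      choose g hg1 hg2 using fun b : B => hA.2 b (hB.1 b b.2).1 (hB.1 b b.2).2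
      set U : Set (Set X) := Set.range fun b : B => g b with hUdef
      have hUA : U ⊆ A := by rintro u ⟨b, rfl⟩; exact hg1 b
      have hUbase : IsNbhdBase E U := by
        constructor
        · intro u hu; exact hA.1 u (hUA hu)
        · intro v hv hEv
          obtain ⟨b, hb, hbv⟩ := hB.2 v hv hEv
          exact ⟨g ⟨b, hb⟩, ⟨⟨b, hb⟩, rfl⟩, (hg2 ⟨b, hb⟩).trans hbv⟩
      have hUcard : #U = charSet E := by
        refine le_antisymm ?_ (charSet_le hUbase)
        exact le_of_le_of_eq Cardinal.mk_range_le hBc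
      refine ⟨U, hUbase.1, hUcard, ?_⟩
      intro V hVU hVκ hEint
      obtain ⟨u, huU, huV⟩ := hUbase.2 _ isOpen_interior hEint
      have husub : ∀ v ∈ V, u ⊆ v := fun v hv =>
        huV.trans (interior_subset.trans (Set.sInter_subset_of_mem hv))
      have hVd : κ ≤ #(V \ {u} : Set (Set X)) := by
        by_contra h
        push_neg at h
        have h1 : #V ≤ #(V \ {u} : Set (Set X)) + 1 := by
          calc #V ≤ #((V \ {u}) ∪ {u} : Set (Set X)) :=
                Cardinal.mk_le_mk_of_subset
                  (by intro x hx; by_cases hxu : x = u <;> simp [hxu, hx])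
            _ ≤ #(V \ {u} : Set (Set X)) + #({u} : Set (Set X)) :=
                Cardinal.mk_union_le _ _
            _ = #(V \ {u} : Set (Set X)) + 1 := by rw [Cardinal.mk_singleton]
        rw [hVκ] at h1
        exact absurd (h1.trans_lt
          (Cardinal.add_lt_of_lt hκ h (Cardinal.one_lt_aleph0.trans_le hκ))) (lt_irrefl κ)
      have hsub : (V \ {u} : Set (Set X)) ⊆ {v | v ∈ A ∧ u ⊂ v} := by
        rintro v ⟨hvV, hvu⟩
        exact ⟨hUA (hVU hvV),
          (husub v hvV).ssubset_of_ne (fun h => hvu (by simp [h.symm]))⟩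
      have hfin : κ ≤ #{v : Set X // v ∈ A ∧ u ⊂ v} :=
        hVd.trans (Cardinal.mk_le_mk_of_subset hsub)
      exact absurd (hcount u (hUA huU)) (not_lt.mpr hfin)
    · rintro ⟨hκ, U, hUopen, hUcard, hUsplit⟩
      refine ⟨hκ, ?_⟩
      obtain ⟨B, hB, hBc⟩ := exists_base_card_eq_char E
      obtain ⟨f⟩ : Nonempty (U ≃ B) := Cardinal.eq.mp (hUcard.trans hBc.symm)
      set A : Set (Set X) := Set.range fun u : U => (u : Set X) ∩ (f u : Set X) with hAdef
      have hAbase : IsNbhdBase E A := by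
        constructor
        · rintro a ⟨u, rfl⟩
          exact ⟨(hUopen u u.2).1.inter (hB.1 _ (f u).2).1,
            Set.subset_inter (hUopen u u.2).2 (hB.1 _ (f u).2).2⟩
        · intro v hv hEv
          obtain ⟨b, hb, hbv⟩ := hB.2 v hv hEv
          refine ⟨_, ⟨f.symm ⟨b, hb⟩, rfl⟩, ?_⟩
          simp only [Equiv.apply_symm_apply]
          exact Set.inter_subset_right.trans hbv
      refine ⟨A, hAbase, ?_⟩
      intro a ha
      by_contra hge
      push_neg at hge
      have hge' : κ ≤ #({v | v ∈ A ∧ a ⊂ v} : Set (Set X)) := hge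
      choose w hw using fun v : ({v | v ∈ A ∧ a ⊂ v} : Set (Set X)) =>
        (v.2.1 : ∃ u : U, (u : Set X) ∩ (f u : Set X) = v)
      have hwinj : Function.Injective fun v : ({v | v ∈ A ∧ a ⊂ v} : Set (Set X)) =>
          (w v : Set X) := by
        intro v₁ v₂ h
        have hww : w v₁ = w v₂ := Subtype.ext h
        apply Subtype.ext
        rw [← hw v₁, ← hw v₂, hww]
      have hWcard : κ ≤ #(Set.range fun v : ({v | v ∈ A ∧ a ⊂ v} : Set (Set X)) =>
          (w v : Set X)) := hge'.trans_eq (Cardinal.mk_range_eq _ hwinj).symm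
      obtain ⟨V, hVW, hVκ⟩ := Cardinal.le_mk_iff_exists_subset.mp hWcard
      have hVU : V ⊆ U := by
        intro x hx
        obtain ⟨v, rfl⟩ := hVW hx
        exact (w v).2
      refine hUsplit V hVU hVκ ?_
      have haopen : IsOpen a ∧ E ⊆ a := hAbase.1 a ha
      have hsub : a ⊆ ⋂₀ V := by
        intro x hx
        rw [Set.mem_sInter]
        intro t ht
        obtain ⟨v, rfl⟩ := hVW ht
        have : a ⊂ (v : Set X) := v.2.2
        have h2 : (v : Set X) ⊆ (w v : Set X) := by
          rw [← hw v]; exact Set.inter_subset_left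
        exact h2 (this.le hx)
      exact haopen.2.trans (haopen.1.subset_interior_iff.mpr hsub)
  unfold locNt
  rw [hsets]
end

section
/- Suppose κ ≥ ω and E is a subset of a space X admitting a local ⟨κ,ω⟩-splitter at E. Then for every neighborhood base A of E, the poset [κ]^{<ω} ordered by ⊆ is Tukey reducible to A ordered by ⊇. -/
open Cardinal

/-- Tukey reducibility: `P ≤_T Q` iff there is a map `f : P → Q` such that the preimage
of every bounded set is bounded (equivalently, whenever the image of `S` is bounded,
so is `S`). -/
def TukeyLE (P Q : Type*) [Preorder P] [Preorder Q] : Prop :=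
  ∃ f : P → Q, ∀ S : Set P, BddAbove (f '' S) → BddAbove S

variable {X : Type u} [TopologicalSpace X]

/-- `U` is a local `⟨κ,ω⟩`-splitter at `E` (with `κ = #U ≥ ω`): a family of open
neighborhoods of `E` such that for every infinite `V ⊆ U`, `E` is not in the interior
of `⋂ V`. -/
def IsOmegaSplitter (E : Set X) (U : Set (Set X)) : Prop :=
  (∀ u ∈ U, IsOpen u ∧ E ⊆ u) ∧ ∀ V ⊆ U, V.Infinite → ¬ E ⊆ interior (⋂₀ V)

/-- If `E ⊆ X` admits a local `⟨κ,ω⟩`-splitter `U` (so `κ = #U ≥ ω`), then for every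
neighborhood base `A` of `E`, the poset `[κ]^{<ω}` of finite subsets of `U` under `⊆`
is Tukey reducible to `A` ordered by `⊇`. -/
theorem tukey_of_splitter (E : Set X) (U : Set (Set X)) (hU : IsOmegaSplitter E U)
    (hUinf : ℵ₀ ≤ #U) (A : Set (Set X)) (hA : IsNbhdBase E A) :
    TukeyLE (Finset ↥U) (↥A)ᵒᵈ := by
  -- For each finite F ⊆ U, pick a basic neighborhood inside ⋂ F.
  have key : ∀ F : Finset ↥U, ∃ a ∈ A, a ⊆ ⋂ u ∈ F, (u : Set X) := by
    intro F
    apply hA.2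
    · exact isOpen_biInter_finset fun u _ => (hU.1 u u.2).1
    · exact Set.subset_iInter₂ fun u _ => (hU.1 u u.2).2
  choose g hgA hgsub using key
  refine ⟨fun F => ⟨g F, hgA F⟩, fun S hS => ?_⟩
  obtain ⟨b', hb⟩ := hS
  set b : ↥A := OrderDual.ofDual b' with hb'
  by_contra hbdd
  -- The union of the elements of S is infinite.
  set T : Set ↥U := ⋃ F ∈ S, (F : Set ↥U) with hT
  have hTinf : T.Infinite := by
    intro hfin
    apply hbdd
    refine ⟨hfin.toFinset, fun F hF => ?_⟩
    intro u hu
    simp only [Set.Finite.mem_toFinset, hT]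
    exact Set.mem_biUnion hF hu
  have hVsub : Subtype.val '' T ⊆ U := by
    rintro _ ⟨t, _, rfl⟩; exact t.2
  have hVinf : (Subtype.val '' T).Infinite :=
    hTinf.image (Set.injOn_of_injective Subtype.val_injective)
  refine hU.2 _ hVsub hVinf ?_
  have hbA : (b : Set X) ∈ A := b.2
  have hbsub : (b : Set X) ⊆ ⋂₀ (Subtype.val '' T) := by
    rintro x hx _ ⟨t, ht, rfl⟩
    simp only [hT, Set.mem_iUnion] at ht
    obtain ⟨F, hF, htF⟩ := ht
    have hbF : (b : Set X) ⊆ g F := hb ⟨F, hF, rfl⟩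
    have := hgsub F (hbF hx)
    exact Set.mem_iInter₂.1 this t htF
  calc E ⊆ (b : Set X) := (hA.1 b hbA).2
    _ ⊆ interior (⋂₀ (Subtype.val '' T)) :=
      interior_maximal hbsub (hA.1 b hbA).1
end

section
/- For every infinite cardinal κ there exists a uniform ultrafilter p on κ such that, in the space u(κ) of uniform ultrafilters on κ, the point p has character 2^κ and local Noetherian type ω; i.e., p has an ω^op-like local base. -/
open Cardinal TopologicalSpace

/-- The set of uniform ultrafilters on `K`: ultrafilters all of whose members have full
cardinality `#K`. -/
def UnifUlt (K : Type u) : Type u := {p : Ultrafilter K // ∀ s ∈ p, #s = #K}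

/-- `u(κ)` is topologized by the basic (cl)open sets `x* = {q : x ∈ q}` for `x ⊆ κ`. -/
instance (K : Type u) : TopologicalSpace (UnifUlt K) :=
  generateFrom {B | ∃ x : Set K, B = {p : UnifUlt K | x ∈ p.1}}

/-- `A` is a local base at `p`. -/
def IsLocalBase {X : Type u} [TopologicalSpace X] (p : X) (A : Set (Set X)) : Prop :=
  (∀ u ∈ A, IsOpen u ∧ p ∈ u) ∧ ∀ v : Set X, IsOpen v → p ∈ v → ∃ u ∈ A, u ⊆ v

/-- The character of `p`: the least cardinality of a local base at `p`. -/
noncomputable def charPt {X : Type u} [TopologicalSpace X] (p : X) : Cardinal.{u} :=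
  sInf {c | ∃ A : Set (Set X), IsLocalBase p A ∧ c = #A}

/-!
Index an independent family `(A Y)` of subsets of `κ` by `Y ∈ 𝒫(κ)`, so that there are `2^κ` of
them, and take an ultrafilter `p` containing every `A Y` but no set that is almost contained
(modulo a set of size `< κ`) in infinitely many `A Y`. It exists because a Boolean combination of
the `A Y` keeps size `κ` after removing finitely many such sets: each of them is almost
contained in some `A Y` not yet used, so adding `(A Y)ᶜ` to the combination removes it up to a
small set. Sets of size `< κ` are almost contained in every `A Y`, so `p` is uniform.

Every neighbourhood of `p` contains some `x*` with `x ∈ p`, and `x* ⊆ (A Y)*` means that `x` is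
almost contained in `A Y`, which happens for finitely many `Y` only. Hence the neighbourhoods
`(A Y ∩ Y)*` (for `Y ∈ p`) and `(A Y)*` (otherwise) form a local base in which each member lies in
finitely many others, and choosing for every `Y` a member of an arbitrary local base inside
`(A Y)*` is a finite-to-one map from `2^κ` into it, so `χ(p) = 2^κ`.
-/

universe v

open Set Filter

section IndependentFamily

variable {α β : Type u} {ι : Type v}

def cell (A : ι → Set α) (F G : Finset ι) : Set α :=
  (⋂ i ∈ F, A i) ∩ ⋂ i ∈ G, (A i)ᶜ

theorem mem_cell {A : ι → Set α} {F G : Finset ι} {a : α} :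
    a ∈ cell A F G ↔ (∀ i ∈ F, a ∈ A i) ∧ ∀ i ∈ G, a ∉ A i := by
  simp [cell]

theorem cell_preimage (A : ι → Set α) (f : β → α) (F G : Finset ι) :
    cell (fun i => f ⁻¹' A i) F G = f ⁻¹' cell A F G := by
  ext; simp [mem_cell]

def IsIndependentFamily (A : ι → Set α) : Prop :=
  ∀ F G : Finset ι, Disjoint F G → #α ≤ #(cell A F G)

theorem IsIndependentFamily.preimage_equiv {A : ι → Set α} (hA : IsIndependentFamily A)
    (e : β ≃ α) : IsIndependentFamily fun i => e ⁻¹' A i := fun F G hFG => by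
  rw [cell_preimage, mk_preimage_equiv, mk_congr e]
  exact hA F G hFG

theorem mk_finset_prod_finset_finset [Infinite α] : #(Finset α × Finset (Finset α)) = #α := by
  rw [mk_prod, lift_id, lift_id, mk_finset_of_infinite, mk_finset_of_infinite,
    mk_finset_of_infinite, mul_eq_self (aleph0_le_mk α)]

/-- Hausdorff's independent family. -/
def hausdorffFamily (Y : Set α) : Set (Finset α × Finset (Finset α)) :=
  {d | ∃ t ∈ d.2, (t : Set α) = ↑d.1 ∩ Y}

theorem isIndependentFamily_hausdorffFamily [Infinite α] :
    IsIndependentFamily (hausdorffFamily (α := α)) := by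
  classical
  intro F G hFG
  have hsep : ∀ q ∈ F ×ˢ G, ∃ a, ¬(a ∈ q.1 ↔ a ∈ q.2) := fun q hq =>
    not_forall.1 fun h => Finset.disjoint_left.1 hFG (Finset.mem_product.1 hq).1
      (Set.ext h ▸ (Finset.mem_product.1 hq).2)
  choose! w hw using hsep
  -- Traces on a superset of `s₀` still tell each member of `F` from each member of `G`.
  set s₀ := (F ×ˢ G).image w
  let trace (k : α) (Y : Set α) : Finset α := (insert k s₀).filter (· ∈ Y)
  let d (k : α) : Finset α × Finset (Finset α) := (insert k s₀, F.image (trace k))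
  have hd : ∀ k, d k ∈ cell hausdorffFamily F G := fun k => by
    refine mem_cell.2
      ⟨fun Y hY => ⟨trace k Y, Finset.mem_image_of_mem _ hY, by ext; simp [trace, d]⟩, ?_⟩
    rintro Z hZ ⟨_, ht, htZ⟩
    obtain ⟨Y, hY, rfl⟩ := Finset.mem_image.1 ht
    have hws : w (Y, Z) ∈ insert k s₀ :=
      Finset.mem_insert_of_mem (Finset.mem_image_of_mem w (Finset.mem_product.2 ⟨hY, hZ⟩))
    have htrace : ∀ a ∈ insert k s₀, a ∈ Y ↔ a ∈ Z := fun a ha => by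
      have := Set.ext_iff.1 htZ a
      simp only [trace, d, Finset.mem_coe, Finset.mem_filter, mem_inter_iff] at this
      simpa only [and_iff_right ha] using this
    exact hw (Y, Z) (Finset.mem_product.2 ⟨hY, hZ⟩) (htrace _ hws)
  have hinj : InjOn d (↑s₀)ᶜ := fun k hk k' _ hkk' => by
    have hk' : k ∈ insert k' s₀ := by
      rw [← show insert k s₀ = insert k' s₀ from congrArg Prod.fst hkk']
      exact Finset.mem_insert_self k s₀
    exact (Finset.mem_insert.1 hk').resolve_right hk
  calc #(Finset α × Finset (Finset α)) = #(((↑s₀ : Set α)ᶜ : Set α)) := by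
        rw [mk_finset_prod_finset_finset,
          mk_compl_of_infinite _ (s₀.finite_toSet.lt_aleph0.trans_le (aleph0_le_mk α))]
    _ = #(d '' (↑s₀)ᶜ) := (mk_image_eq_of_injOn _ _ hinj).symm
    _ ≤ #(cell hausdorffFamily F G) := mk_le_mk_of_subset (image_subset_iff.2 fun k _ => hd k)

theorem exists_isIndependentFamily (α : Type u) [Infinite α] :
    ∃ A : Set α → Set α, IsIndependentFamily A := by
  obtain ⟨e⟩ := Cardinal.eq.1 (mk_finset_prod_finset_finset (α := α))
  exact ⟨_, isIndependentFamily_hausdorffFamily.preimage_equiv e.symm⟩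

end IndependentFamily

section AlmostSupersets

variable {α : Type u} {ι : Type v} {A : ι → Set α}

def almostSupersets (A : ι → Set α) (z : Set α) : Set ι :=
  {i | #(z \ A i : Set α) < #α}

theorem almostSupersets_eq_univ {z : Set α} (hz : #z < #α) : almostSupersets A z = Set.univ :=
  eq_univ_of_forall fun _ => (mk_le_mk_of_subset sdiff_subset).trans_lt hz

variable [Infinite α]

theorem le_mk_of_le_mk_union {s t : Set α} (hst : #α ≤ #(s ∪ t : Set α)) (ht : #t < #α) :
    #α ≤ #s :=
  not_lt.1 fun hs => lt_irrefl _ <|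
    hst.trans_lt <| (mk_union_le s t).trans_lt (add_lt_of_lt (aleph0_le_mk α) hs ht)

theorem IsIndependentFamily.le_mk_cell_diff (hA : IsIndependentFamily A) {S : Finset (Set α)}
    (hS : ∀ z ∈ S, (almostSupersets A z).Infinite) (F G : Finset ι) (hFG : Disjoint F G) :
    #α ≤ #(cell A F G \ ⋃ z ∈ S, z : Set α) := by
  classical
  induction S using Finset.induction_on generalizing G with
  | empty => simpa using hA F G hFG
  | insert z S _ ih =>
    obtain ⟨i, hiz, hiFG⟩ :=
      ((hS z (Finset.mem_insert_self z S)).sdiff (F ∪ G).finite_toSet).nonempty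
    have hi : i ∉ F ∧ i ∉ G := by simpa using hiFG
    have hc := ih (fun z' hz' => hS z' (Finset.mem_insert_of_mem hz')) (insert i G)
      (Finset.disjoint_insert_right.2 ⟨hi.1, hFG⟩)
    refine le_mk_of_le_mk_union (hc.trans (mk_le_mk_of_subset ?_)) hiz
    intro a ⟨haC, haS⟩
    obtain ⟨haF, haG⟩ := mem_cell.1 haC
    by_cases haz : a ∈ z
    · exact Or.inr ⟨haz, haG i (Finset.mem_insert_self i G)⟩
    · refine Or.inl ⟨mem_cell.2 ⟨haF, fun j hj => haG j (Finset.mem_insert_of_mem hj)⟩, ?_⟩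
      simpa [haz] using haS

theorem IsIndependentFamily.exists_ultrafilter (hA : IsIndependentFamily A) :
    ∃ p : Ultrafilter α, (∀ i, A i ∈ p) ∧ ∀ x ∈ p, (almostSupersets A x).Finite := by
  classical
  let 𝓕 := (⨅ i, 𝓟 (A i)) ⊓ ⨅ z : {z : Set α // (almostSupersets A z).Infinite}, 𝓟 (z : Set α)ᶜ
  have : 𝓕.NeBot := by
    refine inf_neBot_iff.2 fun s hs t ht => ?_
    obtain ⟨I, hI, hIs⟩ := (hasBasis_iInf_principal_finite _).mem_iff.1 hs
    obtain ⟨J, hJ, hJt⟩ := (hasBasis_iInf_principal_finite _).mem_iff.1 ht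
    have hcell := hA.le_mk_cell_diff (S := hJ.toFinset.image Subtype.val)
      (by simp only [Finset.mem_image]; rintro _ ⟨z, -, rfl⟩; exact z.2)
      hI.toFinset ∅ (Finset.disjoint_empty_right _)
    obtain ⟨a, haC, haS⟩ := nonempty_coe_sort.1 <| mk_ne_zero_iff.1 <|
      ((mk_ne_zero α).bot_lt.trans_le hcell).ne'
    refine ⟨a, hIs ?_, hJt ?_⟩
    · simpa using (mem_cell.1 haC).1
    · simpa using haS
  obtain ⟨p, hp⟩ := Ultrafilter.exists_le 𝓕
  refine ⟨p, fun i => hp (mem_inf_of_left (mem_iInf_of_mem i (mem_principal_self _))), ?_⟩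
  refine fun x hx => not_infinite.1 fun hxinf => ?_
  have : xᶜ ∈ p := hp (mem_inf_of_right (mem_iInf_of_mem ⟨x, hxinf⟩ (mem_principal_self _)))
  exact p.compl_mem_iff_notMem.1 this hx

end AlmostSupersets

section LocalBase

variable {X ι : Type u} [TopologicalSpace X] {p : X} {U : ι → Set X}

theorem charPt_le {A : Set (Set X)} (hA : IsLocalBase p A) : charPt p ≤ #A :=
  csInf_le' ⟨A, hA, rfl⟩

theorem le_charPt {c : Cardinal} {A : Set (Set X)} (hA : IsLocalBase p A)
    (h : ∀ B, IsLocalBase p B → c ≤ #B) : c ≤ charPt p :=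
  le_csInf ⟨_, A, hA, rfl⟩ fun _ ⟨B, hB, hc⟩ => hc ▸ h B hB

/-- Members of `B` chosen inside the `U i` form a map `ι → B` with finite fibres. -/
theorem IsLocalBase.mk_le (hU : ∀ i, IsOpen (U i) ∧ p ∈ U i)
    (hfin : ∀ v, IsOpen v → p ∈ v → {i | v ⊆ U i}.Finite) (hι : ℵ₀ < #ι)
    {B : Set (Set X)} (hB : IsLocalBase p B) : #ι ≤ #B := by
  choose g hgB hgU using fun i => hB.2 (U i) (hU i).1 (hU i).2
  let g' : ι → B := fun i => ⟨g i, hgB i⟩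
  have hfib : ∀ u : B, #(g' ⁻¹' {u}) ≤ ℵ₀ := fun u =>
    ((hfin u (hB.1 u u.2).1 (hB.1 u u.2).2).subset fun i hi => by
      simpa [← show g i = u from congrArg Subtype.val hi] using hgU i).lt_aleph0.le
  by_contra! hlt
  exact lt_irrefl _ <|
    (mk_le_mk_mul_of_mk_preimage_le g' hfib).trans_lt (mul_lt_of_lt hι.le hlt hι)

theorem charPt_eq_mk (hbase : IsLocalBase p (range U))
    (hfin : ∀ v, IsOpen v → p ∈ v → {i | v ⊆ U i}.Finite) (hι : ℵ₀ < #ι) : charPt p = #ι :=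
  le_antisymm ((charPt_le hbase).trans mk_range_le) <|
    le_charPt hbase fun _ => IsLocalBase.mk_le (fun i => hbase.1 _ (mem_range_self i)) hfin hι

theorem IsLocalBase.finite_ssupersets (hbase : IsLocalBase p (range U))
    (hfin : ∀ v, IsOpen v → p ∈ v → {i | v ⊆ U i}.Finite) :
    ∀ u ∈ range U, {v | v ∈ range U ∧ u ⊂ v}.Finite := by
  rintro _ ⟨j, rfl⟩
  obtain ⟨hopen, hp⟩ := hbase.1 _ (mem_range_self j)
  refine ((hfin _ hopen hp).image U).subset ?_
  rintro _ ⟨⟨i, rfl⟩, hji⟩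
  exact ⟨i, hji.1, rfl⟩

end LocalBase

namespace UnifUlt

variable {K : Type u}

def basicOpen (x : Set K) : Set (UnifUlt K) := {q | x ∈ q.1}

theorem isTopologicalBasis_range_basicOpen :
    IsTopologicalBasis (range (basicOpen (K := K))) where
  exists_subset_inter := by
    rintro _ ⟨x, rfl⟩ _ ⟨y, rfl⟩ q hq
    exact ⟨basicOpen (x ∩ y), mem_range_self _, inter_mem hq.1 hq.2,
      fun r hr => ⟨mem_of_superset hr inter_subset_left, mem_of_superset hr inter_subset_right⟩⟩
  sUnion_eq := sUnion_eq_univ_iff.2 fun q => ⟨basicOpen univ, mem_range_self _, univ_mem⟩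
  eq_generateFrom := congrArg generateFrom <| Set.ext fun _ => exists_congr fun _ => eq_comm

theorem isOpen_basicOpen (x : Set K) : IsOpen (basicOpen x) :=
  isTopologicalBasis_range_basicOpen.isOpen (mem_range_self x)

theorem basicOpen_mono {x y : Set K} (h : x ⊆ y) : basicOpen x ⊆ basicOpen y :=
  fun _ hq => mem_of_superset hq h

theorem exists_basicOpen_subset {v : Set (UnifUlt K)} (hv : IsOpen v) {p : UnifUlt K}
    (hp : p ∈ v) : ∃ x ∈ p.1, basicOpen x ⊆ v := by
  obtain ⟨_, ⟨x, rfl⟩, hpx, hxv⟩ :=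
    isTopologicalBasis_range_basicOpen.exists_subset_of_mem_open hp hv
  exact ⟨x, hpx, hxv⟩

theorem _root_.Ultrafilter.mk_eq_of_compl_mem {q : Ultrafilter K}
    (h : ∀ x : Set K, #x < #K → xᶜ ∈ q) : ∀ s ∈ q, #s = #K := fun s hs =>
  (mk_set_le s).eq_of_not_lt fun hlt => q.compl_mem_iff_notMem.1 (h s hlt) hs

variable [Infinite K]

theorem exists_mem_of_mk_eq {s : Set K} (hs : #s = #K) : ∃ q : UnifUlt K, s ∈ q.1 := by
  let cosmall : Filter K := comk (fun t => #t < #K) (by simpa using (mk_ne_zero K).bot_lt)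
    (fun _ ht _ hst => (mk_le_mk_of_subset hst).trans_lt ht)
    (fun _ ht _ ht' => (mk_union_le _ _).trans_lt (add_lt_of_lt (aleph0_le_mk K) ht ht'))
  have : (cosmall ⊓ 𝓟 s).NeBot := inf_principal_neBot_iff.2 fun t ht => by
    by_contra hts
    have hst : s ⊆ tᶜ := fun a ha hat => hts ⟨a, hat, ha⟩
    have := (mk_le_mk_of_subset hst).trans_lt ht
    exact lt_irrefl _ (hs ▸ this)
  obtain ⟨q, hq⟩ := Ultrafilter.exists_le (cosmall ⊓ 𝓟 s)
  refine ⟨⟨q, q.mk_eq_of_compl_mem fun x hx => ?_⟩, hq (mem_inf_of_right (mem_principal_self s))⟩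
  exact hq (mem_inf_of_left (by simpa [cosmall] using hx))

theorem mk_diff_lt_of_basicOpen_subset {x y : Set K} (h : basicOpen x ⊆ basicOpen y) :
    #(x \ y : Set K) < #K := by
  refine (mk_set_le _).lt_of_ne fun hxy => ?_
  obtain ⟨q, hq⟩ := exists_mem_of_mk_eq hxy
  have hy : y ∈ q.1 := h (mem_of_superset hq sdiff_subset)
  simpa using inter_mem hq hy

end UnifUlt

open UnifUlt in
/-- For every infinite cardinal `κ` (realized as `#K`), there is a uniform ultrafilter
`p` on `κ` such that in `u(κ)` the point `p` has character `2^κ` and an `ω`-op-like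
local base (no member contained in infinitely many members), i.e. local Noetherian
type `ω`. -/
theorem exists_uniform_ultrafilter_char_two_pow_locNt_omega (K : Type u) [Infinite K] :
    ∃ p : UnifUlt K, charPt p = 2 ^ #K ∧
      ∃ A : Set (Set (UnifUlt K)), IsLocalBase p A ∧
        ∀ u ∈ A, {v | v ∈ A ∧ u ⊂ v}.Finite := by
  classical
  obtain ⟨A, hA⟩ := exists_isIndependentFamily K
  obtain ⟨p, hpA, hpfin⟩ := hA.exists_ultrafilter
  let P : UnifUlt K := ⟨p, p.mk_eq_of_compl_mem fun x hx => p.compl_mem_iff_notMem.2 fun hxp =>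
    (hpfin x hxp).not_infinite (almostSupersets_eq_univ hx ▸ infinite_univ)⟩
  -- Cutting `A Y` down to `A Y ∩ Y` when `Y ∈ p` makes the family cofinal in `p`.
  let E (Y : Set K) : Set K := if Y ∈ p then A Y ∩ Y else A Y
  have hE_mem (Y : Set K) : E Y ∈ p := by
    simp only [E]
    split_ifs with hY
    exacts [inter_mem (hpA Y) hY, hpA Y]
  have hfin : ∀ v, IsOpen v → P ∈ v → {Y | v ⊆ basicOpen (E Y)}.Finite := fun v hv hPv => by
    obtain ⟨x, hx, hxv⟩ := exists_basicOpen_subset hv hPv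
    refine (hpfin x hx).subset fun Y hY => mk_diff_lt_of_basicOpen_subset ?_
    exact (hxv.trans hY).trans (basicOpen_mono (by by_cases hY : Y ∈ p <;> simp [E, hY]))
  have hbase : IsLocalBase P (range fun Y => basicOpen (E Y)) := by
    refine ⟨forall_mem_range.2 fun Y => ⟨isOpen_basicOpen _, hE_mem Y⟩, fun v hv hPv => ?_⟩
    obtain ⟨x, hx, hxv⟩ := exists_basicOpen_subset hv hPv
    refine ⟨_, mem_range_self x, (basicOpen_mono ?_).trans hxv⟩
    simp [E, show x ∈ p from hx]
  have hcard : ℵ₀ < #(Set K) := mk_set ▸ (aleph0_le_mk K).trans_lt (cantor _)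
  exact ⟨P, (charPt_eq_mk hbase hfin hcard).trans mk_set, _, hbase, hbase.finite_ssupersets hfin⟩
end
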